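/- arXiv:2409.03962 — 5 statements merged into one kernel-verified Lean document; each statement's English description precedes it below -/
import Mathlib

section
/- In the discrete chain-factorized causal model, let S ⊆ {1, …, K+1} be arbitrary and take the treatment labels in the model to be a_{Z_k} := a₁ if k ∈ S and a_{Z_k} := a₀ if k ∉ S. Then Tian's identifying functional equals the rearranged form of the target functional: Σ_{x, z₁, …, z_{K+1}} z_{K+1} · q(x) · ( Σ_{a ∈ {a₀, a₁}} π(a∣x) · ∏_{k ∈ S} f_k(z_k∣x, z_{1:k−1}, a) ) · ∏_{k ∈ {1,…,K+1}∖S} f_k(z_k∣x, z_{1:k−1}, a₀) = ψ. -/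
/-!
Discrete chain-factorized causal model: the observed vector is
`O = (X, A, Z₁, …, Z_K, Y)` with `A` binary (modeled by `Bool`, with `a₁ := !a₀`),
with joint pmf
`p(x,a,z₁,…,z_K,y) = q(x)·π(a∣x)·∏_{k=1}^K f_k(z_k∣x,z_{1:k−1},a)·f_{K+1}(y∣x,z_{1:K},a)`,
where all kernels are strictly positive pmfs; the outcome takes values in a nonempty
finite set `𝒴 ⊆ ℝ`.
-/

namespace ChainCausal

variable {K : ℕ}

/-- Embedding of the indices `j < k` into `Fin K`, for `k : Fin (K+1)`. -/
def emb (k : Fin (K + 1)) (j : Fin (k : ℕ)) : Fin K :=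
  Fin.castLE k.is_le j

/-- The type of prefixes `(z₁, …, z_{(k:ℕ)})`. -/
abbrev PrefAt (Zm : Fin K → Type) (k : Fin (K + 1)) : Type :=
  (j : Fin (k : ℕ)) → Zm (emb k j)

/-- Full mediator vectors `(z₁, …, z_K)`. -/
abbrev ZVec (Zm : Fin K → Type) : Type := ∀ j : Fin K, Zm j

/-- The prefix type `(z₁, …, z_{k−1})` appearing in the signature of the `k`-th mediator
kernel. -/
abbrev MedPref (Zm : Fin K → Type) (k : Fin K) : Type :=
  (j : Fin (k : ℕ)) → Zm (Fin.castLE k.isLt.le j)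

/-- Restriction of a full mediator vector to the prefix below a mediator index. -/
def medTake (Zm : Fin K → Type) (z : ZVec Zm) (k : Fin K) : MedPref Zm k :=
  fun j => z (Fin.castLE k.isLt.le j)

/-- Restriction of a full mediator vector to the prefix below `k : Fin (K+1)`. -/
def takeAt (Zm : Fin K → Type) (z : ZVec Zm) (k : Fin (K + 1)) : PrefAt Zm k :=
  fun j => z (emb k j)

/-- A discrete chain-factorized causal model: a strictly positive pmf `q` on covariates,
a strictly positive propensity `π(·∣x)` on `{0,1}`, strictly positive mediator kernels
`f_k(·∣x,z_{1:k−1},a)` and a strictly positive outcome kernel `f_{K+1}(·∣x,z_{1:K},a)`. -/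
structure Model (K : ℕ) (𝒳 : Type) [Fintype 𝒳] (Zm : Fin K → Type)
    [∀ k, Fintype (Zm k)] (𝒴 : Finset ℝ) : Type where
  q : 𝒳 → ℝ
  pi : Bool → 𝒳 → ℝ
  f : (k : Fin K) → 𝒳 → MedPref Zm k → Bool → Zm k → ℝ
  fY : 𝒳 → ZVec Zm → Bool → ↥𝒴 → ℝ
  q_pos : ∀ x, 0 < q x
  q_sum : ∑ x, q x = 1
  pi_pos : ∀ a x, 0 < pi a x
  pi_sum : ∀ x, ∑ a, pi a x = 1
  f_pos : ∀ k x h a w, 0 < f k x h a w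
  f_sum : ∀ k x h a, ∑ w, f k x h a w = 1
  fY_pos : ∀ x z a y, 0 < fY x z a y
  fY_sum : ∀ x z a, ∑ y, fY x z a y = 1

variable {𝒳 : Type} [Fintype 𝒳] {Zm : Fin K → Type} [∀ k, Fintype (Zm k)]
  {𝒴 : Finset ℝ}

/-- The joint pmf of `O = (X, A, Z₁, …, Z_K, Y)`. -/
def jointp (M : Model K 𝒳 Zm 𝒴) (x : 𝒳) (a : Bool) (z : ZVec Zm) (y : ↥𝒴) : ℝ :=
  M.q x * M.pi a x * (∏ k, M.f k x (medTake Zm z k) a (z k)) * M.fY x z a y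

/-- The `k`-th conditional kernel `f_k(z_k∣x,z_{1:k−1},a)` for `k : Fin (K+1)`
(a mediator kernel if `(k:ℕ) < K`, the outcome kernel if `(k:ℕ) = K`). -/
def ker (M : Model K 𝒳 Zm 𝒴) (k : Fin (K + 1)) (x : 𝒳) (z : ZVec Zm) (y : ↥𝒴)
    (a : Bool) : ℝ :=
  if h : (k : ℕ) < K then
    M.f ⟨(k : ℕ), h⟩ x (medTake Zm z ⟨(k : ℕ), h⟩) a (z ⟨(k : ℕ), h⟩)
  else M.fY x z a y

/-- The target functional
`ψ := Σ_x q(x)·π(a₁∣x)·Σ_{z,y} y·∏_{k=1}^{K+1} f_k(z_k∣x,z_{1:k−1},a_{Z_k}) + E[1{A = a₀}·Y]`,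
where `a₁ = !a₀` and `aZ` are the fixed treatment labels. -/
def psi (M : Model K 𝒳 Zm 𝒴) (aZ : Fin (K + 1) → Bool) (a0 : Bool) : ℝ :=
  (∑ x, M.q x * M.pi (!a0) x *
      ∑ z : ZVec Zm, ∑ y : ↥𝒴, (y : ℝ) * ∏ k, ker M k x z y (aZ k)) +
    ∑ x, ∑ a, ∑ z : ZVec Zm, ∑ y : ↥𝒴,
      jointp M x a z y * (if a = a0 then (y : ℝ) else 0)

/-- for an arbitrary `S ⊆ {1,…,K+1}`, taking the treatment labels
`a_{Z_k} := a₁` if `k ∈ S` and `a_{Z_k} := a₀` otherwise, Tian's identifying functional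
equals the rearranged form `ψ` of the target functional. -/
theorem statement_0 [Nonempty 𝒳] [∀ k, Nonempty (Zm k)] (h𝒴 : 𝒴.Nonempty)
    (M : Model K 𝒳 Zm 𝒴) (a0 : Bool) (S : Finset (Fin (K + 1))) :
    (∑ x, ∑ z : ZVec Zm, ∑ y : ↥𝒴,
        (y : ℝ) * M.q x * (∑ a, M.pi a x * ∏ k ∈ S, ker M k x z y a) *
          ∏ k ∈ Sᶜ, ker M k x z y a0) =
      psi M (fun k => if k ∈ S then !a0 else a0) a0 := by

  classical
  have hsplit : ∀ x z (y : ↥𝒴),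
      (∏ k : Fin (K+1), ker M k x z y a0)
        = (∏ k, M.f k x (medTake Zm z k) a0 (z k)) * M.fY x z a0 y := by
    intro x z y
    rw [Fin.prod_univ_castSucc]
    congr 1
    · refine Finset.prod_congr rfl fun k _ => ?_
      have hk : ((Fin.castSucc k : Fin (K+1)) : ℕ) < K := k.isLt
      simp [ker, hk]
    · simp [ker]
  have hmix : ∀ x z (y : ↥𝒴),
      (∏ k ∈ S, ker M k x z y (!a0)) * ∏ k ∈ Sᶜ, ker M k x z y a0
        = ∏ k : Fin (K+1), ker M k x z y (if k ∈ S then !a0 else a0) := by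
    intro x z y
    rw [← Finset.prod_mul_prod_compl S
        (fun k => ker M k x z y (if k ∈ S then !a0 else a0))]
    congr 1
    · exact Finset.prod_congr rfl fun k hk => by rw [if_pos hk]
    · exact Finset.prod_congr rfl fun k hk => by
        rw [if_neg (Finset.mem_compl.mp hk)]
  have hbool : ∀ g : Bool → ℝ, (∑ a, g a) = g a0 + g (!a0) := by
    intro g; cases a0 <;> simp [add_comm]
  have key : ∀ x z (y : ↥𝒴),
      (y : ℝ) * M.q x * (∑ a, M.pi a x * ∏ k ∈ S, ker M k x z y a) *
          ∏ k ∈ Sᶜ, ker M k x z y a0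
        = M.q x * M.pi (!a0) x *
            ((y : ℝ) * ∏ k : Fin (K+1), ker M k x z y (if k ∈ S then !a0 else a0))
          + jointp M x a0 z y * (y : ℝ) := by
    intro x z y
    rw [hbool (fun a => M.pi a x * ∏ k ∈ S, ker M k x z y a)]
    have h1 := hmix x z y
    have h2 := hsplit x z y
    rw [← Finset.prod_mul_prod_compl S (fun k => ker M k x z y a0)] at h2
    unfold jointp
    linear_combination ((y : ℝ) * M.q x * M.pi (!a0) x) * h1 +
      ((y : ℝ) * M.q x * M.pi a0 x) * h2
  calc (∑ x, ∑ z : ZVec Zm, ∑ y : ↥𝒴,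
        (y : ℝ) * M.q x * (∑ a, M.pi a x * ∏ k ∈ S, ker M k x z y a) *
          ∏ k ∈ Sᶜ, ker M k x z y a0)
      = ∑ x, ∑ z : ZVec Zm, ∑ y : ↥𝒴,
          (M.q x * M.pi (!a0) x *
            ((y : ℝ) * ∏ k : Fin (K+1), ker M k x z y (if k ∈ S then !a0 else a0))
          + jointp M x a0 z y * (y : ℝ)) := by
        refine Finset.sum_congr rfl fun x _ => Finset.sum_congr rfl fun z _ =>
          Finset.sum_congr rfl fun y _ => key x z y
    _ = psi M (fun k => if k ∈ S then !a0 else a0) a0 := by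
        unfold psi
        simp only [Finset.sum_add_distrib]
        congr 1
        · refine Finset.sum_congr rfl fun x _ => ?_
          rw [Finset.mul_sum]
          exact Finset.sum_congr rfl fun z _ => by rw [Finset.mul_sum]
        · refine Finset.sum_congr rfl fun x _ => ?_
          rw [hbool (fun a => ∑ z : ZVec Zm, ∑ y : ↥𝒴,
              jointp M x a z y * (if a = a0 then (y : ℝ) else 0))]
          simp


end ChainCausal
end

section
/- In the discrete chain-factorized causal model with sequential regressions B_k: (i) for every k ∈ {1, …, K+1}, B_k(x, z_{1:k−1}) = E[B_{k+1}(X, Z_{1:k}) ∣ X = x, Z_{1:k−1} = z_{1:k−1}, A = a_{Z_k}] (the conditioning event has positive probability by positivity of the kernels); (ii) B_1(x) = Σ_{z₁, …, z_{K+1}} z_{K+1}·∏_{k=1}^{K+1} f_k(z_k∣x, z_{1:k−1}, a_{Z_k}); and consequently (iii) ψ = Σ_x q(x)·π(a₁∣x)·B_1(x) + E[1{A = a₀}·Y], so the recursive pseudo-outcome regressions recover the identifying functional without any density estimation. -/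
/-!
Discrete chain-factorized causal model: the observed vector is
`O = (X, A, Z₁, …, Z_K, Y)` with `A` binary (modeled by `Bool`, with `a₁ := !a₀`),
with joint pmf
`p(x,a,z₁,…,z_K,y) = q(x)·π(a∣x)·∏_{k=1}^K f_k(z_k∣x,z_{1:k−1},a)·f_{K+1}(y∣x,z_{1:K},a)`,
where all kernels are strictly positive pmfs; the outcome takes values in a nonempty
finite set `𝒴 ⊆ ℝ`.
-/

namespace ChainCausal

variable {K : ℕ}

variable {𝒳 : Type} [Fintype 𝒳] {Zm : Fin K → Type} [∀ k, Fintype (Zm k)]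
  {𝒴 : Finset ℝ}

/-- The sequential regressions, in descending-counter form: `Bdesc M aZ t x z y`
is `B_{K+2−t}(x, z_{1:K+1−t})`, where `B_{K+2}(x,z_{1:K+1}) := z_{K+1}` and
`B_k(x,z_{1:k−1}) := Σ_{z_k} f_k(z_k∣x,z_{1:k−1},a_{Z_k})·B_{k+1}(x,z_{1:k})`. -/
def Bdesc (M : Model K 𝒳 Zm 𝒴) (aZ : Fin (K + 1) → Bool) :
    ℕ → 𝒳 → ZVec Zm → ↥𝒴 → ℝ
  | 0, _x, _z, y => (y : ℝ)
  | 1, x, z, _y => ∑ y' : ↥𝒴, M.fY x z (aZ (Fin.last K)) y' * (y' : ℝ)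
  | d + 2, x, z, y =>
    if h : K - (d + 1) < K then
      ∑ w : Zm ⟨K - (d + 1), h⟩,
        M.f ⟨K - (d + 1), h⟩ x (medTake Zm z ⟨K - (d + 1), h⟩)
            (aZ (Fin.castSucc ⟨K - (d + 1), h⟩)) w *
          Bdesc M aZ (d + 1) x (Function.update z ⟨K - (d + 1), h⟩ w) y
    else Bdesc M aZ (d + 1) x z y

end ChainCausal

/-!
Summing the joint pmf with treatment `a` over the event `Z_{1:k−1} = z_{1:k−1}` leaves
`q(x)·π(a∣x)·∏_{j<k} f_j`, because every later kernel sums to one; this is the positive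
normalizer in (i). The regression `B_{k+1}` depends on `z_{1:k}` only, so in the numerator the
same collapse stops one step earlier and leaves `Σ_{z_k} f_k·B_{k+1} = B_k`. Unrolling the
recursion for `B_k` from the outcome backwards gives the g-formula (ii), and (iii) is (ii)
substituted into `ψ`.
-/

namespace ChainCausal

section Prefixes

variable {K : ℕ} {Zm : Fin K → Type}

lemma medTake_eq_takeAt (z : ZVec Zm) (i : Fin K) :
    medTake Zm z i = takeAt Zm z i.castSucc :=
  rfl

lemma takeAt_update_castSucc (z : ZVec Zm) (i : Fin K) (w : Zm i) :
    takeAt Zm (Function.update z i w) i.castSucc = takeAt Zm z i.castSucc :=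
  funext fun j => Function.update_of_ne (Fin.ne_of_val_ne j.isLt.ne) w z

lemma medTake_update_of_le (z : ZVec Zm) {i j : Fin K} (hji : j ≤ i) (w : Zm i) :
    medTake Zm (Function.update z i w) j = medTake Zm z j :=
  funext fun m => Function.update_of_ne (Fin.ne_of_val_ne (m.isLt.trans_le hji).ne) w z

lemma takeAt_succ_eq_iff (z z' : ZVec Zm) (i : Fin K) :
    takeAt Zm z' i.succ = takeAt Zm z i.succ ↔
      takeAt Zm z' i.castSucc = takeAt Zm z i.castSucc ∧ z' i = z i := by
  constructor
  · intro h
    exact ⟨funext fun j => congrFun h j.castSucc, congrFun h (Fin.last i)⟩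
  · rintro ⟨hpre, hi⟩
    funext j
    induction j using Fin.lastCases with
    | last => exact hi
    | cast j => exact congrFun hpre j

lemma takeAt_succ_update_eq_iff (z z' : ZVec Zm) (i : Fin K) (w : Zm i) :
    takeAt Zm z' i.succ = takeAt Zm (Function.update z i w) i.succ ↔
      takeAt Zm z' i.castSucc = takeAt Zm z i.castSucc ∧ z' i = w := by
  rw [takeAt_succ_eq_iff, takeAt_update_castSucc, Function.update_self]

end Prefixes

variable {K : ℕ} {𝒳 : Type} [Fintype 𝒳] {Zm : Fin K → Type} [∀ k, Fintype (Zm k)]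
  {𝒴 : Finset ℝ}

section Weights

variable (M : Model K 𝒳 Zm 𝒴) (x : 𝒳)

def chainWeight (b : Fin (K + 1) → Bool) (z : ZVec Zm) (y : ↥𝒴) : ℝ :=
  (∏ j : Fin K, M.f j x (medTake Zm z j) (b j.castSucc) (z j)) * M.fY x z (b (Fin.last K)) y

def prefixWeight (b : Fin (K + 1) → Bool) (k : Fin (K + 1)) (z : ZVec Zm) : ℝ :=
  ∏ j : Fin K, if (j : ℕ) < k then M.f j x (medTake Zm z j) (b j.castSucc) (z j) else 1

lemma jointp_eq_mul_chainWeight (a : Bool) (z : ZVec Zm) (y : ↥𝒴) :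
    jointp M x a z y = M.q x * M.pi a x * chainWeight M x (fun _ => a) z y := by
  unfold jointp chainWeight
  ring

lemma prod_ker_eq_chainWeight (b : Fin (K + 1) → Bool) (z : ZVec Zm) (y : ↥𝒴) :
    ∏ k, ker M k x z y (b k) = chainWeight M x b z y := by
  rw [Fin.prod_univ_castSucc]
  congr 1
  · exact Finset.prod_congr rfl fun i _ => dif_pos i.isLt
  · exact dif_neg (by simp)

lemma prefixWeight_zero (b : Fin (K + 1) → Bool) (z : ZVec Zm) : prefixWeight M x b 0 z = 1 :=
  Finset.prod_eq_one fun _ _ => if_neg (Nat.not_lt_zero _)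

lemma prefixWeight_pos (b : Fin (K + 1) → Bool) (k : Fin (K + 1)) (z : ZVec Zm) :
    0 < prefixWeight M x b k z :=
  Finset.prod_pos fun _ _ => by
    split
    · exact M.f_pos _ _ _ _ _
    · exact one_pos

lemma sum_chainWeight_mul (b : Fin (K + 1) → Bool) (z : ZVec Zm) (g : ↥𝒴 → ℝ) :
    ∑ y, chainWeight M x b z y * g y =
      prefixWeight M x b (Fin.last K) z * ∑ y, M.fY x z (b (Fin.last K)) y * g y := by
  have hlast : prefixWeight M x b (Fin.last K) z =
      ∏ j : Fin K, M.f j x (medTake Zm z j) (b j.castSucc) (z j) :=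
    Finset.prod_congr rfl fun j _ => if_pos j.isLt
  simp only [hlast, chainWeight, Finset.mul_sum, mul_assoc]

lemma prefixWeight_succ_update (b : Fin (K + 1) → Bool) (z : ZVec Zm) (i : Fin K) (w : Zm i) :
    prefixWeight M x b i.succ (Function.update z i w) =
      prefixWeight M x b i.castSucc z * M.f i x (medTake Zm z i) (b i.castSucc) w := by
  have hterm : ∀ j : Fin K,
      (if (j : ℕ) < i.succ then
          M.f j x (medTake Zm (Function.update z i w) j) (b j.castSucc) (Function.update z i w j)
        else 1) =
        (if (j : ℕ) < i.castSucc then M.f j x (medTake Zm z j) (b j.castSucc) (z j) else 1) *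
          if j = i then M.f i x (medTake Zm z i) (b i.castSucc) w else 1 := by
    intro j
    rcases lt_trichotomy j i with hlt | rfl | hgt
    · have hlt' : (j : ℕ) < i := hlt
      simp [hlt', hlt.ne, Nat.lt_add_one_of_lt hlt', medTake_update_of_le z hlt.le]
    · simp [medTake_update_of_le z le_rfl]
    · have hgt' : ¬ (j : ℕ) < i + 1 := by have : (i : ℕ) < j := hgt; omega
      simp [hgt', hgt.ne', hgt'.imp Nat.lt_add_one_of_lt]
  simp only [prefixWeight, hterm, Finset.prod_mul_distrib, Finset.prod_ite_eq', Finset.mem_univ,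
    if_true]

end Weights

section Regressions

variable (M : Model K 𝒳 Zm 𝒴) (aZ : Fin (K + 1) → Bool) (x : 𝒳)

lemma Bdesc_last (z : ZVec Zm) (y : ↥𝒴) :
    Bdesc M aZ (K + 1 - Fin.last K) x z y = ∑ y', M.fY x z (aZ (Fin.last K)) y' * (y' : ℝ) := by
  simp [Bdesc]

lemma Bdesc_castSucc (i : Fin K) (z : ZVec Zm) (y : ↥𝒴) :
    Bdesc M aZ (K + 1 - i.castSucc) x z y =
      ∑ w, M.f i x (medTake Zm z i) (aZ i.castSucc) w *
        Bdesc M aZ (K + 1 - i.succ) x (Function.update z i w) y := by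
  obtain ⟨d, hd⟩ : ∃ d, K + 1 - (i : ℕ) = d + 2 := ⟨K - i - 1, by omega⟩
  have hi : K - (d + 1) = i := by omega
  have hsucc : K + 1 - (i.succ : ℕ) = d + 1 := by simp only [Fin.val_succ]; omega
  rw [Fin.val_castSucc, hd, hsucc, Bdesc, dif_pos (hi ▸ i.isLt)]
  obtain ⟨i, hiK⟩ := i
  dsimp only at hi
  subst hi
  rfl

lemma Bdesc_congr_takeAt (k : Fin (K + 1)) {z₁ z₂ : ZVec Zm} (y₁ y₂ : ↥𝒴)
    (h : takeAt Zm z₁ k = takeAt Zm z₂ k) :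
    Bdesc M aZ (K + 1 - k) x z₁ y₁ = Bdesc M aZ (K + 1 - k) x z₂ y₂ := by
  induction k using Fin.reverseInduction generalizing z₁ z₂ with
  | last =>
    obtain rfl : z₁ = z₂ := h
    rw [Bdesc_last, Bdesc_last]
  | cast i ih =>
    rw [Bdesc_castSucc, Bdesc_castSucc, medTake_eq_takeAt, medTake_eq_takeAt, h]
    refine Finset.sum_congr rfl fun w _ => congrArg _ (ih ?_)
    exact (takeAt_succ_update_eq_iff _ _ i w).2 ⟨by rw [takeAt_update_castSucc, h],
      Function.update_self ..⟩

end Regressions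

section PrefixSums

variable [∀ k, DecidableEq (Zm k)] (M : Model K 𝒳 Zm 𝒴) (x : 𝒳)

/-- Unnormalized conditional expectation of `G` given `X = x` and `Z_{1:k} = z_{1:k}`, under the
chain whose `j`-th kernel is evaluated at treatment `b j`. -/
def prefixSum (b : Fin (K + 1) → Bool) (k : Fin (K + 1)) (z : ZVec Zm)
    (G : ZVec Zm → ↥𝒴 → ℝ) : ℝ :=
  ∑ z', ∑ y', chainWeight M x b z' y' *
    (if takeAt Zm z' k = takeAt Zm z k then (1 : ℝ) else 0) * G z' y'

lemma sum_jointp_mul_ite (a : Bool) (k : Fin (K + 1)) (z : ZVec Zm) (G : ZVec Zm → ↥𝒴 → ℝ) :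
    ∑ z', ∑ y', jointp M x a z' y' *
        (if takeAt Zm z' k = takeAt Zm z k then (1 : ℝ) else 0) * G z' y' =
      M.q x * M.pi a x * prefixSum M x (fun _ => a) k z G := by
  simp only [prefixSum, Finset.mul_sum, jointp_eq_mul_chainWeight, mul_assoc]

lemma prefixSum_last (b : Fin (K + 1) → Bool) (z : ZVec Zm) (G : ZVec Zm → ↥𝒴 → ℝ) :
    prefixSum M x b (Fin.last K) z G = ∑ y, chainWeight M x b z y * G z y := by
  rw [prefixSum, Fintype.sum_eq_single z fun z' hz' => ?_]
  · simp only [↓reduceIte, mul_one]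
  · have hne : ¬ takeAt Zm z' (Fin.last K) = takeAt Zm z (Fin.last K) := hz'
    simp only [if_neg hne, mul_zero, zero_mul, Finset.sum_const_zero]

lemma prefixSum_zero (b : Fin (K + 1) → Bool) (z : ZVec Zm) (G : ZVec Zm → ↥𝒴 → ℝ) :
    prefixSum M x b 0 z G = ∑ z', ∑ y, chainWeight M x b z' y * G z' y := by
  have htrivial : ∀ z' : ZVec Zm, takeAt Zm z' 0 = takeAt Zm z 0 :=
    fun _ => funext fun j => absurd j.isLt (by simp)
  simp only [prefixSum, htrivial, ↓reduceIte, mul_one]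

lemma ite_takeAt_castSucc_eq_sum (z z' : ZVec Zm) (i : Fin K) :
    (if takeAt Zm z' i.castSucc = takeAt Zm z i.castSucc then (1 : ℝ) else 0) =
      ∑ w : Zm i,
        if takeAt Zm z' i.succ = takeAt Zm (Function.update z i w) i.succ then 1 else 0 := by
  by_cases hpre : takeAt Zm z' i.castSucc = takeAt Zm z i.castSucc <;>
    simp [takeAt_succ_update_eq_iff, hpre]

lemma prefixSum_castSucc (b : Fin (K + 1) → Bool) (i : Fin K) (z : ZVec Zm)
    (G : ZVec Zm → ↥𝒴 → ℝ) :
    prefixSum M x b i.castSucc z G = ∑ w, prefixSum M x b i.succ (Function.update z i w) G := by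
  simp only [prefixSum, ite_takeAt_castSucc_eq_sum z, Finset.mul_sum, Finset.sum_mul]
  exact (Finset.sum_congr rfl fun _ _ => Finset.sum_comm).trans Finset.sum_comm

-- The kernels after the first `k` sum to one.
lemma prefixSum_eq_prefixWeight_mul (b : Fin (K + 1) → Bool) (k : Fin (K + 1)) (z : ZVec Zm)
    (H : ZVec Zm → ℝ) (hH : ∀ z₁ z₂, takeAt Zm z₁ k = takeAt Zm z₂ k → H z₁ = H z₂) :
    prefixSum M x b k z (fun z' _ => H z') = prefixWeight M x b k z * H z := by
  induction k using Fin.reverseInduction generalizing z with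
  | last =>
    have hsum : ∑ y, chainWeight M x b z y = prefixWeight M x b (Fin.last K) z := by
      simpa only [mul_one, M.fY_sum] using sum_chainWeight_mul M x b z fun _ => 1
    rw [prefixSum_last, ← Finset.sum_mul, hsum]
  | cast i ih =>
    have hH' : ∀ z₁ z₂, takeAt Zm z₁ i.succ = takeAt Zm z₂ i.succ → H z₁ = H z₂ :=
      fun z₁ z₂ h => hH z₁ z₂ ((takeAt_succ_eq_iff _ _ i).1 h).1
    have hupdate : ∀ w, H (Function.update z i w) = H z :=
      fun w => hH _ _ (takeAt_update_castSucc z i w)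
    simp only [prefixSum_castSucc, ih _ hH', prefixWeight_succ_update, hupdate,
      mul_right_comm _ _ (H z), ← Finset.mul_sum, M.f_sum, mul_one]

lemma prefixSum_val_eq_prefixWeight_mul_Bdesc (aZ : Fin (K + 1) → Bool) (k : Fin (K + 1))
    (z : ZVec Zm) (y : ↥𝒴) :
    prefixSum M x aZ k z (fun _ y' => (y' : ℝ)) =
      prefixWeight M x aZ k z * Bdesc M aZ (K + 1 - k) x z y := by
  induction k using Fin.reverseInduction generalizing z with
  | last => rw [prefixSum_last, sum_chainWeight_mul, Bdesc_last]
  | cast i ih =>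
    simp only [prefixSum_castSucc, ih, prefixWeight_succ_update, Bdesc_castSucc, Finset.mul_sum,
      mul_assoc]

lemma prefixSum_Bdesc_eq_prefixWeight_mul_Bdesc (aZ : Fin (K + 1) → Bool) (k : Fin (K + 1))
    (z : ZVec Zm) (y : ↥𝒴) :
    prefixSum M x (fun _ => aZ k) k z (fun z' y' => Bdesc M aZ (K - k) x z' y') =
      prefixWeight M x (fun _ => aZ k) k z * Bdesc M aZ (K + 1 - k) x z y := by
  induction k using Fin.lastCases with
  | last =>
    rw [prefixSum_last, Bdesc_last]
    simp only [Fin.val_last, Nat.sub_self, Bdesc]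
    exact sum_chainWeight_mul ..
  | cast i =>
    have hsub : K - (i.castSucc : ℕ) = K + 1 - i.succ := by
      simp only [Fin.val_succ, Fin.val_castSucc]; omega
    have hcollapse : ∀ w, prefixSum M x (fun _ => aZ i.castSucc) i.succ (Function.update z i w)
        (fun z' y' => Bdesc M aZ (K + 1 - i.succ) x z' y') =
          prefixWeight M x (fun _ => aZ i.castSucc) i.succ (Function.update z i w) *
            Bdesc M aZ (K + 1 - i.succ) x (Function.update z i w) y := by
      intro w
      rw [← prefixSum_eq_prefixWeight_mul M x _ i.succ _ _
        fun z₁ z₂ h => Bdesc_congr_takeAt M aZ x i.succ y y h]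
      exact congrArg _ (funext₂ fun z' y' => Bdesc_congr_takeAt M aZ x i.succ y' y rfl)
    simp only [hsub, prefixSum_castSucc, hcollapse, prefixWeight_succ_update, Bdesc_castSucc,
      Finset.mul_sum, mul_assoc]

end PrefixSums

/-- Here `k : Fin (K + 1)` is the level `k + 1` of the informal statement, so
`Bdesc M aZ (K + 1 - k)` is the regression `B_{k+1}`. -/
theorem statement_1_general [∀ k, DecidableEq (Zm k)]
    (M : Model K 𝒳 Zm 𝒴) (aZ : Fin (K + 1) → Bool) (a0 : Bool) :
    (∀ (k : Fin (K + 1)) (x : 𝒳) (z : ZVec Zm) (y : ↥𝒴),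
        0 < (∑ z' : ZVec Zm, ∑ y' : ↥𝒴, jointp M x (aZ k) z' y' *
              (if takeAt Zm z' k = takeAt Zm z k then (1 : ℝ) else 0)) ∧
        Bdesc M aZ (K + 1 - (k : ℕ)) x z y =
          (∑ z' : ZVec Zm, ∑ y' : ↥𝒴, jointp M x (aZ k) z' y' *
              (if takeAt Zm z' k = takeAt Zm z k then (1 : ℝ) else 0) *
              Bdesc M aZ (K - (k : ℕ)) x z' y') /
            (∑ z' : ZVec Zm, ∑ y' : ↥𝒴, jointp M x (aZ k) z' y' *
              (if takeAt Zm z' k = takeAt Zm z k then (1 : ℝ) else 0))) ∧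
    (∀ (x : 𝒳) (z : ZVec Zm) (y : ↥𝒴),
        Bdesc M aZ (K + 1) x z y =
          ∑ z' : ZVec Zm, ∑ y' : ↥𝒴, (y' : ℝ) * ∏ k, ker M k x z' y' (aZ k)) ∧
    (∀ (z : ZVec Zm) (y : ↥𝒴),
        psi M aZ a0 =
          (∑ x, M.q x * M.pi (!a0) x * Bdesc M aZ (K + 1) x z y) +
            ∑ x, ∑ a, ∑ z' : ZVec Zm, ∑ y' : ↥𝒴,
              jointp M x a z' y' * (if a = a0 then (y' : ℝ) else 0)) := by
  have hden : ∀ k x z, (∑ z' : ZVec Zm, ∑ y' : ↥𝒴, jointp M x (aZ k) z' y' *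
      (if takeAt Zm z' k = takeAt Zm z k then (1 : ℝ) else 0)) =
        M.q x * M.pi (aZ k) x * prefixWeight M x (fun _ => aZ k) k z := fun k x z => by
    have h := sum_jointp_mul_ite M x (aZ k) k z fun _ _ => 1
    rw [prefixSum_eq_prefixWeight_mul M x _ k z (fun _ => 1) fun _ _ _ => rfl] at h
    simpa only [mul_one] using h
  have hden_pos : ∀ k x z, 0 < M.q x * M.pi (aZ k) x * prefixWeight M x (fun _ => aZ k) k z :=
    fun k x z => mul_pos (mul_pos (M.q_pos x) (M.pi_pos _ x)) (prefixWeight_pos M x _ k z)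
  have hB1 : ∀ x z y, Bdesc M aZ (K + 1) x z y =
      ∑ z' : ZVec Zm, ∑ y' : ↥𝒴, (y' : ℝ) * ∏ k, ker M k x z' y' (aZ k) := fun x z y => by
    have h := prefixSum_val_eq_prefixWeight_mul_Bdesc M x aZ 0 z y
    rw [prefixSum_zero, prefixWeight_zero, one_mul, Fin.val_zero, Nat.sub_zero] at h
    simp only [← h, prod_ker_eq_chainWeight, mul_comm]
  refine ⟨fun k x z y => ⟨hden k x z ▸ hden_pos k x z, ?_⟩, hB1, fun z y => ?_⟩
  · rw [sum_jointp_mul_ite, prefixSum_Bdesc_eq_prefixWeight_mul_Bdesc _ _ _ _ _ y, hden,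
      ← mul_assoc, mul_div_cancel_left₀ _ (hden_pos k x z).ne']
  · simp only [psi, hB1]

/-- with `B_k` the sequential regressions (`B_k = Bdesc (K+2−k)` in
descending-counter form, for 1-indexed `k`; here `k : Fin (K+1)` stands for the
1-indexed level `k+1`):
(i) `B_k(x,z_{1:k−1}) = E[B_{k+1}(X,Z_{1:k}) ∣ X = x, Z_{1:k−1} = z_{1:k−1}, A = a_{Z_k}]`,
and the conditioning event has positive probability;
(ii) `B_1(x) = Σ_{z,y} y·∏_{k=1}^{K+1} f_k(z_k∣x,z_{1:k−1},a_{Z_k})`;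
(iii) `ψ = Σ_x q(x)·π(a₁∣x)·B_1(x) + E[1{A=a₀}·Y]`. -/
theorem statement_1 [Nonempty 𝒳] [∀ k, Nonempty (Zm k)] [∀ k, DecidableEq (Zm k)]
    (h𝒴 : 𝒴.Nonempty) (M : Model K 𝒳 Zm 𝒴) (aZ : Fin (K + 1) → Bool) (a0 : Bool) :
    (∀ (k : Fin (K + 1)) (x : 𝒳) (z : ZVec Zm) (y : ↥𝒴),
        0 < (∑ z' : ZVec Zm, ∑ y' : ↥𝒴, jointp M x (aZ k) z' y' *
              (if takeAt Zm z' k = takeAt Zm z k then (1 : ℝ) else 0)) ∧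
        Bdesc M aZ (K + 1 - (k : ℕ)) x z y =
          (∑ z' : ZVec Zm, ∑ y' : ↥𝒴, jointp M x (aZ k) z' y' *
              (if takeAt Zm z' k = takeAt Zm z k then (1 : ℝ) else 0) *
              Bdesc M aZ (K - (k : ℕ)) x z' y') /
            (∑ z' : ZVec Zm, ∑ y' : ↥𝒴, jointp M x (aZ k) z' y' *
              (if takeAt Zm z' k = takeAt Zm z k then (1 : ℝ) else 0))) ∧
    (∀ (x : 𝒳) (z : ZVec Zm) (y : ↥𝒴),
        Bdesc M aZ (K + 1) x z y =
          ∑ z' : ZVec Zm, ∑ y' : ↥𝒴, (y' : ℝ) * ∏ k, ker M k x z' y' (aZ k)) ∧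
    (∀ (z : ZVec Zm) (y : ↥𝒴),
        psi M aZ a0 =
          (∑ x, M.q x * M.pi (!a0) x * Bdesc M aZ (K + 1) x z y) +
            ∑ x, ∑ a, ∑ z' : ZVec Zm, ∑ y' : ↥𝒴,
              jointp M x a z' y' * (if a = a0 then (y' : ℝ) else 0)) :=
  statement_1_general M aZ a0

end ChainCausal
end

section
/- In the discrete chain-factorized causal model, the influence function has mean zero under the observed data law: E[Φ(O)] = Σ_o p(o)·Φ(o) = 0. -/
/-!
Discrete chain-factorized causal model: the observed vector is
`O = (X, A, Z₁, …, Z_K, Y)` with `A` binary (modeled by `Bool`, with `a₁ := !a₀`),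
with joint pmf
`p(x,a,z₁,…,z_K,y) = q(x)·π(a∣x)·∏_{k=1}^K f_k(z_k∣x,z_{1:k−1},a)·f_{K+1}(y∣x,z_{1:K},a)`,
where all kernels are strictly positive pmfs; the outcome takes values in a nonempty
finite set `𝒴 ⊆ ℝ`.
-/

namespace ChainCausal

variable {K : ℕ}

variable {𝒳 : Type} [Fintype 𝒳] {Zm : Fin K → Type} [∀ k, Fintype (Zm k)]
  {𝒴 : Finset ℝ}

/-- The treatment density ratio `f^r_A(x) := π(a₁∣x)/π(a₀∣x)`. -/
noncomputable def frA (M : Model K 𝒳 Zm 𝒴) (a0 : Bool) (x : 𝒳) : ℝ :=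
  M.pi (!a0) x / M.pi a0 x

/-- Restriction of a prefix of length `(k:ℕ)` to the sub-prefix below `j`. -/
def subPref {Zm : Fin K → Type} (k : Fin (K + 1)) (h : PrefAt Zm k)
    (j : Fin (k : ℕ)) : MedPref Zm (emb k j) :=
  fun i => h (Fin.castLE j.isLt.le i)

/-- The mediator density ratio
`f^r_j(x, z_{1:j}) := f_j(z_j∣x,z_{1:j−1},a_{Z_j}) / f_j(z_j∣x,z_{1:j−1},1−a_{Z_j})`. -/
noncomputable def frMedP (M : Model K 𝒳 Zm 𝒴) (aZ : Fin (K + 1) → Bool) (k : Fin (K + 1))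
    (j : Fin (k : ℕ)) (x : 𝒳) (h : PrefAt Zm k) : ℝ :=
  M.f (emb k j) x (subPref k h j) (aZ (Fin.castSucc (emb k j))) (h j) /
    M.f (emb k j) x (subPref k h j) (!aZ (Fin.castSucc (emb k j))) (h j)

/-- The density-ratio product
`R_k(x,z_{1:k−1}) := (f^r_A(x) if a_{Z_k}=a₀ else 1)·∏_{j<k, a_{Z_j}≠a_{Z_k}} f^r_j(x,z_{1:j})`. -/
noncomputable def RkP (M : Model K 𝒳 Zm 𝒴) (aZ : Fin (K + 1) → Bool) (a0 : Bool)
    (k : Fin (K + 1)) (x : 𝒳) (h : PrefAt Zm k) : ℝ :=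
  (if aZ k = a0 then frA M a0 x else 1) *
    ∏ j : Fin (k : ℕ),
      if aZ (Fin.castSucc (emb k j)) ≠ aZ k then frMedP M aZ k j x h else 1

/-- The nonparametric efficient influence function
`Φ(o) := Σ_{k=1}^{K+1} 1{a=a_{Z_k}}·R_k(x,z_{1:k−1})·(B_{k+1}(x,z_{1:k}) − B_k(x,z_{1:k−1}))
  + (1{a=a₁} − π(a₁∣x))·B_1(x) + π(a₁∣x)·B_1(x) + 1{a=a₀}·z_{K+1} − ψ`. -/
noncomputable def Phi (M : Model K 𝒳 Zm 𝒴) (aZ : Fin (K + 1) → Bool) (a0 : Bool)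
    (x : 𝒳) (a : Bool) (z : ZVec Zm) (y : ↥𝒴) : ℝ :=
  (∑ k : Fin (K + 1),
      (if a = aZ k then (1 : ℝ) else 0) * RkP M aZ a0 k x (takeAt Zm z k) *
        (Bdesc M aZ (K - (k : ℕ)) x z y - Bdesc M aZ (K + 1 - (k : ℕ)) x z y)) +
    ((if a = !a0 then (1 : ℝ) else 0) - M.pi (!a0) x) * Bdesc M aZ (K + 1) x z y +
    M.pi (!a0) x * Bdesc M aZ (K + 1) x z y +
    (if a = a0 then (y : ℝ) else 0) - psi M aZ a0

/-! ### Auxiliary lemmas for the proof -/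

section Aux

variable (M : Model K 𝒳 Zm 𝒴) (aZ : Fin (K + 1) → Bool)

lemma medTake_update (z : ZVec Zm) (c : Fin K) (w : Zm c) (j : Fin K)
    (h : (j : ℕ) ≤ (c : ℕ)) :
    medTake Zm (Function.update z c w) j = medTake Zm z j := by
  funext i
  have hne : (Fin.castLE j.isLt.le i) ≠ c := by
    intro he
    have : (i : ℕ) < (j : ℕ) := i.isLt
    have : ((Fin.castLE j.isLt.le i : Fin K) : ℕ) = (c : ℕ) := by rw [he]
    simp [Fin.coe_castLE] at this
    omega
  simp [medTake, Function.update_of_ne hne]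

lemma takeAt_update (z : ZVec Zm) (c : Fin K) (w : Zm c) (k : Fin (K + 1))
    (h : (k : ℕ) ≤ (c : ℕ)) :
    takeAt Zm (Function.update z c w) k = takeAt Zm z k := by
  funext j
  have hne : emb k j ≠ c := by
    intro he
    have hj : (j : ℕ) < (k : ℕ) := j.isLt
    have : ((emb k j : Fin K) : ℕ) = (c : ℕ) := by rw [he]
    simp [emb, Fin.coe_castLE] at this
    omega
  simp [takeAt, Function.update_of_ne hne]

/-- The fundamental coordinate-splitting identity for sums over `ZVec`. -/
lemma card_mul_sum_update (c : Fin K) (A φ : ZVec Zm → ℝ)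
    (hA : ∀ z w, A (Function.update z c w) = A z) :
    (Fintype.card (Zm c) : ℝ) * ∑ z : ZVec Zm, A z * φ z
      = ∑ z : ZVec Zm, A z * ∑ w, φ (Function.update z c w) := by
  classical
  have hinv : Function.Involutive
      (fun p : ZVec Zm × Zm c => ((Function.update p.1 c p.2 : ZVec Zm), p.1 c)) := by
    intro p
    simp [Function.update_idem, Function.update_eq_self]
  have key : ∑ p : ZVec Zm × Zm c, A p.1 * φ p.1
      = ∑ p : ZVec Zm × Zm c, A p.1 * φ (Function.update p.1 c p.2) := by
    apply Fintype.sum_bijective _ hinv.bijective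
    intro p
    dsimp only
    rw [hA, Function.update_idem, Function.update_eq_self]
  calc (Fintype.card (Zm c) : ℝ) * ∑ z : ZVec Zm, A z * φ z
      = ∑ z : ZVec Zm, ∑ _w : Zm c, A z * φ z := by
        rw [Finset.sum_comm]
        simp [Finset.sum_const, nsmul_eq_mul, Finset.mul_sum]
    _ = ∑ p : ZVec Zm × Zm c, A p.1 * φ p.1 := by rw [Fintype.sum_prod_type]
    _ = ∑ p : ZVec Zm × Zm c, A p.1 * φ (Function.update p.1 c p.2) := key
    _ = ∑ z : ZVec Zm, A z * ∑ w, φ (Function.update z c w) := by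
        rw [Fintype.sum_prod_type]
        simp [Finset.mul_sum]

/-- `Bdesc t` (for `1 ≤ t ≤ K+1`) depends only on the coordinates `< K+1−t` of `z`,
and not on `y`. -/
lemma Bdesc_const : ∀ t, 1 ≤ t → t ≤ K + 1 → ∀ (x : 𝒳) (z z' : ZVec Zm) (y y' : ↥𝒴),
    (∀ j : Fin K, (j : ℕ) < K + 1 - t → z j = z' j) →
    Bdesc M aZ t x z y = Bdesc M aZ t x z' y'
  | 0, h1, _, _, _, _, _, _, _ => by omega
  | 1, _, _, x, z, z', y, y', hag => by
    have hz : z = z' := by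
      funext j
      exact hag j (by omega)
    simp [Bdesc, hz]
  | (d + 2), _, h2, x, z, z', y, y', hag => by
    have hc : K - (d + 1) < K := by omega
    rw [Bdesc, Bdesc, dif_pos hc, dif_pos hc]
    apply Finset.sum_congr rfl
    intro w _
    have hmt : medTake Zm z ⟨K - (d + 1), hc⟩ = medTake Zm z' ⟨K - (d + 1), hc⟩ := by
      funext i
      apply hag
      have hi : (i : ℕ) < K - (d + 1) := i.isLt
      show (i : ℕ) < K + 1 - (d + 2)
      omega
    rw [hmt]
    congr 1
    apply Bdesc_const (d + 1) (by omega) (by omega)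
    intro j hj
    by_cases hjc : j = ⟨K - (d + 1), hc⟩
    · subst hjc; simp
    · rw [Function.update_of_ne hjc, Function.update_of_ne hjc]
      have hv : (j : ℕ) ≠ K - (d + 1) := fun hh => hjc (Fin.ext hh)
      exact hag j (by omega)

/-- Masked weight: kernels below level `m` and uniform weights above. -/
noncomputable def mask (M : Model K 𝒳 Zm 𝒴) (β : Fin K → Bool) (m : ℕ) (x : 𝒳)
    (z : ZVec Zm) : ℝ :=
  ∏ j : Fin K, if (j : ℕ) < m then M.f j x (medTake Zm z j) (β j) (z j)
    else ((Fintype.card (Zm j) : ℝ))⁻¹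

/-- The masked weight with the factor at `c` removed. -/
noncomputable def maskNe (β : Fin K → Bool) (c : Fin K) (x : 𝒳) (z : ZVec Zm) : ℝ :=
  ∏ j ∈ Finset.univ.erase c, if (j : ℕ) < (c : ℕ) then M.f j x (medTake Zm z j) (β j) (z j)
    else ((Fintype.card (Zm j) : ℝ))⁻¹

lemma mask_succ (β : Fin K → Bool) (c : Fin K) (x : 𝒳) (z : ZVec Zm) :
    mask M β ((c : ℕ) + 1) x z
      = M.f c x (medTake Zm z c) (β c) (z c) * maskNe M β c x z := by
  rw [mask, maskNe, ← Finset.mul_prod_erase Finset.univ _ (Finset.mem_univ c)]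
  rw [if_pos (by omega)]
  congr 1
  apply Finset.prod_congr rfl
  intro j hj
  have hjc : j ≠ c := (Finset.mem_erase.1 hj).1
  have hv : (j : ℕ) ≠ (c : ℕ) := fun hh => hjc (Fin.ext hh)
  by_cases h : (j : ℕ) < (c : ℕ)
  · rw [if_pos h, if_pos (by omega)]
  · rw [if_neg h, if_neg (by omega)]

lemma mask_self (β : Fin K → Bool) (c : Fin K) (x : 𝒳) (z : ZVec Zm) :
    mask M β (c : ℕ) x z = ((Fintype.card (Zm c) : ℝ))⁻¹ * maskNe M β c x z := by
  rw [mask, maskNe, ← Finset.mul_prod_erase Finset.univ _ (Finset.mem_univ c)]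
  rw [if_neg (by omega)]

lemma maskNe_update (β : Fin K → Bool) (c : Fin K) (x : 𝒳) (z : ZVec Zm) (w : Zm c) :
    maskNe M β c x (Function.update z c w) = maskNe M β c x z := by
  apply Finset.prod_congr rfl
  intro j hj
  have hjc : j ≠ c := (Finset.mem_erase.1 hj).1
  by_cases h : (j : ℕ) < (c : ℕ)
  · rw [if_pos h, if_pos h, medTake_update _ _ _ _ (by omega),
      Function.update_of_ne hjc]
  · rw [if_neg h, if_neg h]

/-- The core single-coordinate step: summing out the `c`-th kernel. -/
lemma step_core [∀ k, Nonempty (Zm k)] (β : Fin K → Bool) (c : Fin K) (x : 𝒳)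
    (G D : ZVec Zm → ℝ) (hG : ∀ z w, G (Function.update z c w) = G z) :
    ∑ z : ZVec Zm, mask M β ((c : ℕ) + 1) x z * G z * D z
      = ∑ z : ZVec Zm, mask M β (c : ℕ) x z * G z *
          ∑ w, M.f c x (medTake Zm z c) (β c) w * D (Function.update z c w) := by
  have hcard : ((Fintype.card (Zm c) : ℝ)) ≠ 0 := by
    exact_mod_cast Fintype.card_ne_zero
  set A : ZVec Zm → ℝ := fun z => maskNe M β c x z * G z with hA
  set φ : ZVec Zm → ℝ := fun z => M.f c x (medTake Zm z c) (β c) (z c) * D z with hφ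
  have hAinv : ∀ z w, A (Function.update z c w) = A z := by
    intro z w
    simp only [hA]
    rw [maskNe_update, hG]
  have h1 := card_mul_sum_update c A φ hAinv
  have hupd : ∀ (z : ZVec Zm), (∑ w, φ (Function.update z c w))
      = ∑ w, M.f c x (medTake Zm z c) (β c) w * D (Function.update z c w) := by
    intro z
    apply Finset.sum_congr rfl
    intro w _
    simp only [hφ]
    rw [medTake_update _ _ _ _ (le_refl _), Function.update_self]
  calc ∑ z : ZVec Zm, mask M β ((c : ℕ) + 1) x z * G z * D z
      = ∑ z : ZVec Zm, A z * φ z := by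
        apply Finset.sum_congr rfl
        intro z _
        rw [mask_succ]
        simp only [hA, hφ]
        ring
    _ = ((Fintype.card (Zm c) : ℝ))⁻¹ *
          ((Fintype.card (Zm c) : ℝ) * ∑ z : ZVec Zm, A z * φ z) := by
        rw [inv_mul_cancel_left₀ hcard]
    _ = ((Fintype.card (Zm c) : ℝ))⁻¹ *
          ∑ z : ZVec Zm, A z * ∑ w, φ (Function.update z c w) := by rw [h1]
    _ = ∑ z : ZVec Zm, mask M β (c : ℕ) x z * G z *
          ∑ w, M.f c x (medTake Zm z c) (β c) w * D (Function.update z c w) := by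
        rw [Finset.mul_sum]
        apply Finset.sum_congr rfl
        intro z _
        rw [hupd z, mask_self]
        simp only [hA]
        ring

/-- Marginalization: the tail kernels integrate out against invariant integrands. -/
lemma marg [∀ k, Nonempty (Zm k)] (β : Fin K → Bool) (x : 𝒳) :
    ∀ t, t ≤ K → ∀ G : ZVec Zm → ℝ,
      (∀ c : Fin K, K - t ≤ (c : ℕ) → ∀ z w, G (Function.update z c w) = G z) →
      ∑ z : ZVec Zm, mask M β K x z * G z = ∑ z : ZVec Zm, mask M β (K - t) x z * G z
  | 0, _, G, _ => by simp
  | (t + 1), ht, G, hG => by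
    have hc : K - (t + 1) < K := by omega
    set c : Fin K := ⟨K - (t + 1), hc⟩ with hcdef
    have ih := marg β x t (by omega) G (fun c' h' => hG c' (by omega))
    rw [ih]
    have hKt : K - t = (c : ℕ) + 1 := by simp only [hcdef]; omega
    rw [hKt]
    have hGc : ∀ z w, G (Function.update z c w) = G z := hG c (by simp [hcdef])
    calc ∑ z : ZVec Zm, mask M β ((c : ℕ) + 1) x z * G z
        = ∑ z : ZVec Zm, mask M β ((c : ℕ) + 1) x z * G z * (fun _ => (1 : ℝ)) z := by
          simp
      _ = ∑ z : ZVec Zm, mask M β (c : ℕ) x z * G z *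
            ∑ w, M.f c x (medTake Zm z c) (β c) w * (fun _ => (1 : ℝ)) (Function.update z c w) :=
          step_core M β c x G _ hGc
      _ = ∑ z : ZVec Zm, mask M β (K - (t + 1)) x z * G z := by
          apply Finset.sum_congr rfl
          intro z _
          simp [M.f_sum, hcdef]

/-- Tower property: pulling `Bdesc` up along the chain. -/
lemma big [∀ k, Nonempty (Zm k)] (β : Fin K → Bool) (x : 𝒳) (y₀ : ↥𝒴) :
    ∀ t, 1 ≤ t → t ≤ K + 1 →
      (∀ c : Fin K, K + 1 - t ≤ (c : ℕ) → β c = aZ (Fin.castSucc c)) →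
      ∑ z : ZVec Zm, mask M β K x z * Bdesc M aZ 1 x z y₀
        = ∑ z : ZVec Zm, mask M β (K + 1 - t) x z * Bdesc M aZ t x z y₀
  | 0, h1, _, _ => by omega
  | 1, _, _, _ => by simp
  | (d + 2), _, h2, hβ => by
    have hc : K - (d + 1) < K := by omega
    set c : Fin K := ⟨K - (d + 1), hc⟩ with hcdef
    have ih := big β x y₀ (d + 1) (by omega) (by omega) (fun c' h' => hβ c' (by omega))
    rw [ih]
    have hKd : K + 1 - (d + 1) = (c : ℕ) + 1 := by simp only [hcdef]; omega
    rw [hKd]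
    have hβc : β c = aZ (Fin.castSucc c) := hβ c (by simp [hcdef])
    calc ∑ z : ZVec Zm, mask M β ((c : ℕ) + 1) x z * Bdesc M aZ (d + 1) x z y₀
        = ∑ z : ZVec Zm, mask M β ((c : ℕ) + 1) x z * (fun _ => (1 : ℝ)) z *
            (fun z => Bdesc M aZ (d + 1) x z y₀) z := by simp
      _ = ∑ z : ZVec Zm, mask M β (c : ℕ) x z * (fun _ => (1 : ℝ)) z *
            ∑ w, M.f c x (medTake Zm z c) (β c) w *
              (fun z => Bdesc M aZ (d + 1) x z y₀) (Function.update z c w) :=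
          step_core M β c x _ _ (fun _ _ => rfl)
      _ = ∑ z : ZVec Zm, mask M β (K + 1 - (d + 2)) x z * Bdesc M aZ (d + 2) x z y₀ := by
          apply Finset.sum_congr rfl
          intro z _
          have hm : K + 1 - (d + 2) = (c : ℕ) := by simp only [hcdef]; omega
          rw [hm]
          congr 1
          · simp
          · rw [Bdesc, dif_pos hc, hβc]

lemma mask_K (β : Fin K → Bool) (x : 𝒳) (z : ZVec Zm) :
    mask M β K x z = ∏ j, M.f j x (medTake Zm z j) (β j) (z j) := by
  apply Finset.prod_congr rfl
  intro j _
  rw [if_pos j.isLt]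

lemma sum_mask_zero [∀ k, Nonempty (Zm k)] (β : Fin K → Bool) (x : 𝒳) :
    ∑ z : ZVec Zm, mask M β 0 x z = 1 := by
  have hconst : ∀ z : ZVec Zm, mask M β 0 x z = ∏ j, ((Fintype.card (Zm j) : ℝ))⁻¹ := by
    intro z
    apply Finset.prod_congr rfl
    intro j _
    rw [if_neg (by omega)]
  calc ∑ z : ZVec Zm, mask M β 0 x z
      = ∑ _z : ZVec Zm, ∏ j, ((Fintype.card (Zm j) : ℝ))⁻¹ :=
        Finset.sum_congr rfl (fun z _ => hconst z)
    _ = (Fintype.card (ZVec Zm) : ℝ) * ∏ j, ((Fintype.card (Zm j) : ℝ))⁻¹ := by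
        rw [Finset.sum_const, Finset.card_univ, nsmul_eq_mul]
    _ = (∏ j, (Fintype.card (Zm j) : ℝ)) * ∏ j, ((Fintype.card (Zm j) : ℝ))⁻¹ := by
        rw [Fintype.card_pi]
        push_cast
        ring
    _ = 1 := by
        rw [← Finset.prod_mul_distrib]
        apply Finset.prod_eq_one
        intro j _
        rw [mul_inv_cancel₀]
        exact_mod_cast Fintype.card_ne_zero

/-- Normalization of the conditional law given `x`, `a`. -/
lemma sum_W_one [∀ k, Nonempty (Zm k)] (x : 𝒳) (a : Bool) :
    ∑ z : ZVec Zm, ∑ y : ↥𝒴,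
      (∏ j, M.f j x (medTake Zm z j) a (z j)) * M.fY x z a y = 1 := by
  have h1 : ∀ z : ZVec Zm, ∑ y : ↥𝒴,
      (∏ j, M.f j x (medTake Zm z j) a (z j)) * M.fY x z a y
        = mask M (fun _ => a) K x z * (fun _ : ZVec Zm => (1 : ℝ)) z := by
    intro z
    rw [← Finset.mul_sum, M.fY_sum, mask_K]
  rw [Finset.sum_congr rfl (fun z _ => h1 z),
    marg M (fun _ => a) x K (le_refl K) (fun _ => (1 : ℝ)) (fun _ _ _ _ => rfl)]
  simpa using sum_mask_zero M (fun _ => a) x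

/-- One-step unfolding of `Bdesc` with an abstract coordinate. -/
lemma Bdesc_step (c : Fin K) (t : ℕ) (hct : (c : ℕ) = K - t) (h1 : 1 ≤ t) (h2 : t ≤ K)
    (x : 𝒳) (z : ZVec Zm) (y : ↥𝒴) :
    Bdesc M aZ (t + 1) x z y
      = ∑ w : Zm c, M.f c x (medTake Zm z c) (aZ (Fin.castSucc c)) w *
          Bdesc M aZ t x (Function.update z c w) y := by
  cases t with
  | zero => omega
  | succ s =>
    have hc : K - (s + 1) < K := by omega
    have hceq : c = ⟨K - (s + 1), hc⟩ := Fin.ext (by simpa using hct)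
    subst hceq
    rw [Bdesc, dif_pos hc]

lemma prod_ker (x : 𝒳) (z : ZVec Zm) (y : ↥𝒴) :
    ∏ k, ker M k x z y (aZ k)
      = (∏ j : Fin K, M.f j x (medTake Zm z j) (aZ (Fin.castSucc j)) (z j)) *
          M.fY x z (aZ (Fin.last K)) y := by
  rw [Fin.prod_univ_castSucc]
  congr 1
  · apply Finset.prod_congr rfl
    intro j _
    rw [ker, dif_pos (show ((Fin.castSucc j : Fin (K + 1)) : ℕ) < K from j.isLt)]
    rfl
  · rw [ker, dif_neg (by simp)]

/-- The inner sum of the first part of `ψ` equals `B₁(x)`. -/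
lemma psi1_rep [∀ k, Nonempty (Zm k)] (x : 𝒳) (z₀ : ZVec Zm) (y₀ : ↥𝒴) :
    ∑ z : ZVec Zm, ∑ y : ↥𝒴, (y : ℝ) * ∏ k, ker M k x z y (aZ k)
      = Bdesc M aZ (K + 1) x z₀ y₀ := by
  have h1 : ∀ z : ZVec Zm, ∑ y : ↥𝒴, (y : ℝ) * ∏ k, ker M k x z y (aZ k)
      = mask M (fun j => aZ (Fin.castSucc j)) K x z * Bdesc M aZ 1 x z y₀ := by
    intro z
    have : ∀ y : ↥𝒴, (y : ℝ) * ∏ k, ker M k x z y (aZ k)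
        = (∏ j : Fin K, M.f j x (medTake Zm z j) (aZ (Fin.castSucc j)) (z j)) *
            (M.fY x z (aZ (Fin.last K)) y * (y : ℝ)) := by
      intro y
      rw [prod_ker]
      ring
    rw [Finset.sum_congr rfl (fun y _ => this y), ← Finset.mul_sum, mask_K]
    rfl
  rw [Finset.sum_congr rfl (fun z _ => h1 z),
    big M aZ (fun j => aZ (Fin.castSucc j)) x y₀ (K + 1) (by omega) (le_refl _)
      (fun c _ => rfl)]
  have h2 : ∀ z : ZVec Zm, mask M (fun j => aZ (Fin.castSucc j)) (K + 1 - (K + 1)) x z *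
      Bdesc M aZ (K + 1) x z y₀
        = mask M (fun j => aZ (Fin.castSucc j)) 0 x z * Bdesc M aZ (K + 1) x z₀ y₀ := by
    intro z
    rw [Nat.sub_self]
    congr 1
    exact Bdesc_const M aZ (K + 1) (by omega) (le_refl _) x z z₀ y₀ y₀ (fun j hj => by omega)
  rw [Finset.sum_congr rfl (fun z _ => h2 z), ← Finset.sum_mul,
    sum_mask_zero, one_mul]

/-- Expectation of `B₁(x)` under the conditional law given `x`, `a`. -/
lemma EB1 [∀ k, Nonempty (Zm k)] (x : 𝒳) (a : Bool) (z₀ : ZVec Zm) (y₀ : ↥𝒴) :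
    ∑ z : ZVec Zm, ∑ y : ↥𝒴,
      (∏ j, M.f j x (medTake Zm z j) a (z j)) * M.fY x z a y * Bdesc M aZ (K + 1) x z y
        = Bdesc M aZ (K + 1) x z₀ y₀ := by
  have h1 : ∀ (z : ZVec Zm) (y : ↥𝒴),
      (∏ j, M.f j x (medTake Zm z j) a (z j)) * M.fY x z a y * Bdesc M aZ (K + 1) x z y
        = (∏ j, M.f j x (medTake Zm z j) a (z j)) * M.fY x z a y *
            Bdesc M aZ (K + 1) x z₀ y₀ := by
    intro z y
    rw [Bdesc_const M aZ (K + 1) (by omega) (le_refl _) x z z₀ y y₀ (fun j hj => by omega)]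
  calc ∑ z : ZVec Zm, ∑ y : ↥𝒴,
      (∏ j, M.f j x (medTake Zm z j) a (z j)) * M.fY x z a y * Bdesc M aZ (K + 1) x z y
      = ∑ z : ZVec Zm, ∑ y : ↥𝒴,
          (∏ j, M.f j x (medTake Zm z j) a (z j)) * M.fY x z a y *
            Bdesc M aZ (K + 1) x z₀ y₀ :=
        Finset.sum_congr rfl (fun z _ => Finset.sum_congr rfl (fun y _ => h1 z y))
    _ = (∑ z : ZVec Zm, ∑ y : ↥𝒴,
          (∏ j, M.f j x (medTake Zm z j) a (z j)) * M.fY x z a y) *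
            Bdesc M aZ (K + 1) x z₀ y₀ := by
        rw [Finset.sum_mul]
        exact Finset.sum_congr rfl (fun z _ => by rw [Finset.sum_mul])
    _ = Bdesc M aZ (K + 1) x z₀ y₀ := by rw [sum_W_one, one_mul]

/-- The expectation of each summand of the influence function vanishes. -/
lemma term_zero [∀ k, Nonempty (Zm k)] (a0 : Bool) (x : 𝒳) (y₀ : ↥𝒴) (k : Fin (K + 1)) :
    ∑ z : ZVec Zm, ∑ y : ↥𝒴,
      (∏ j, M.f j x (medTake Zm z j) (aZ k) (z j)) * M.fY x z (aZ k) y *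
        (RkP M aZ a0 k x (takeAt Zm z k) *
          (Bdesc M aZ (K - (k : ℕ)) x z y - Bdesc M aZ (K + 1 - (k : ℕ)) x z y)) = 0 := by
  classical
  have hGinv : ∀ (c' : Fin K), (k : ℕ) ≤ (c' : ℕ) → ∀ (z : ZVec Zm) (w : Zm c'),
      RkP M aZ a0 k x (takeAt Zm (Function.update z c' w) k)
        = RkP M aZ a0 k x (takeAt Zm z k) := by
    intro c' hc' z w
    rw [takeAt_update _ _ _ _ hc']
  rcases lt_or_ge (k : ℕ) K with hk | hk
  · -- mediator case
    set c : Fin K := ⟨(k : ℕ), hk⟩ with hcdef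
    have hcv : (c : ℕ) = (k : ℕ) := rfl
    set βa : Fin K → Bool := fun _ => aZ k with hβdef
    set G : ZVec Zm → ℝ := fun z => RkP M aZ a0 k x (takeAt Zm z k) with hGdef
    set D1 : ZVec Zm → ℝ := fun z => Bdesc M aZ (K - (k : ℕ)) x z y₀ with hD1
    set D2 : ZVec Zm → ℝ := fun z => Bdesc M aZ (K - (k : ℕ) + 1) x z y₀ with hD2
    have hy : ∀ z : ZVec Zm,
        ∑ y : ↥𝒴, (∏ j, M.f j x (medTake Zm z j) (aZ k) (z j)) * M.fY x z (aZ k) y *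
          (RkP M aZ a0 k x (takeAt Zm z k) *
            (Bdesc M aZ (K - (k : ℕ)) x z y - Bdesc M aZ (K + 1 - (k : ℕ)) x z y))
        = mask M βa K x z * (G z * D1 z) - mask M βa K x z * (G z * D2 z) := by
      intro z
      have e1 : ∀ y : ↥𝒴, Bdesc M aZ (K - (k : ℕ)) x z y = D1 z := fun y =>
        Bdesc_const M aZ _ (by omega) (by omega) x z z y y₀ (fun _ _ => rfl)
      have e2 : ∀ y : ↥𝒴, Bdesc M aZ (K + 1 - (k : ℕ)) x z y = D2 z := fun y => by
        rw [show K + 1 - (k : ℕ) = K - (k : ℕ) + 1 from by omega]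
        exact Bdesc_const M aZ _ (by omega) (by omega) x z z y y₀ (fun _ _ => rfl)
      calc ∑ y : ↥𝒴, (∏ j, M.f j x (medTake Zm z j) (aZ k) (z j)) * M.fY x z (aZ k) y *
          (RkP M aZ a0 k x (takeAt Zm z k) *
            (Bdesc M aZ (K - (k : ℕ)) x z y - Bdesc M aZ (K + 1 - (k : ℕ)) x z y))
          = ∑ y : ↥𝒴, M.fY x z (aZ k) y *
              ((∏ j, M.f j x (medTake Zm z j) (aZ k) (z j)) * (G z * (D1 z - D2 z))) := by
            apply Finset.sum_congr rfl
            intro y _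
            rw [e1 y, e2 y]
            simp only [hGdef]
            ring
        _ = (∏ j, M.f j x (medTake Zm z j) (aZ k) (z j)) * (G z * (D1 z - D2 z)) := by
            rw [← Finset.sum_mul, M.fY_sum, one_mul]
        _ = mask M βa K x z * (G z * D1 z) - mask M βa K x z * (G z * D2 z) := by
            rw [mask_K]
            ring
    rw [Finset.sum_congr rfl (fun z _ => hy z), Finset.sum_sub_distrib]
    have hm1 : ∑ z : ZVec Zm, mask M βa K x z * (G z * D1 z)
        = ∑ z : ZVec Zm, mask M βa ((c : ℕ) + 1) x z * (G z * D1 z) := by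
      have hinv : ∀ (c' : Fin K), K - (K - ((k : ℕ) + 1)) ≤ (c' : ℕ) →
          ∀ (z : ZVec Zm) (w : Zm c'),
            G (Function.update z c' w) * D1 (Function.update z c' w) = G z * D1 z := by
        intro c' hc' z w
        have hkc : (k : ℕ) + 1 ≤ (c' : ℕ) := by omega
        simp only [hGdef, hD1]
        rw [hGinv c' (by omega) z w]
        congr 1
        apply Bdesc_const M aZ _ (by omega) (by omega)
        intro j hj
        have hjc : j ≠ c' := by
          intro he
          have : (j : ℕ) = (c' : ℕ) := by rw [he]
          omega
        rw [Function.update_of_ne hjc]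
      have := marg M βa x (K - ((k : ℕ) + 1)) (by omega) (fun z => G z * D1 z) hinv
      rw [show K - (K - ((k : ℕ) + 1)) = (c : ℕ) + 1 from by rw [hcv]; omega] at this
      exact this
    have hm2 : ∑ z : ZVec Zm, mask M βa K x z * (G z * D2 z)
        = ∑ z : ZVec Zm, mask M βa (c : ℕ) x z * (G z * D2 z) := by
      have hinv : ∀ (c' : Fin K), K - (K - (k : ℕ)) ≤ (c' : ℕ) →
          ∀ (z : ZVec Zm) (w : Zm c'),
            G (Function.update z c' w) * D2 (Function.update z c' w) = G z * D2 z := by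
        intro c' hc' z w
        have hkc : (k : ℕ) ≤ (c' : ℕ) := by omega
        simp only [hGdef, hD2]
        rw [hGinv c' hkc z w]
        congr 1
        apply Bdesc_const M aZ _ (by omega) (by omega)
        intro j hj
        have hjc : j ≠ c' := by
          intro he
          have : (j : ℕ) = (c' : ℕ) := by rw [he]
          omega
        rw [Function.update_of_ne hjc]
      have := marg M βa x (K - (k : ℕ)) (by omega) (fun z => G z * D2 z) hinv
      rw [show K - (K - (k : ℕ)) = (c : ℕ) from by rw [hcv]; omega] at this
      exact this
    rw [hm1, hm2]
    have htower : ∀ z : ZVec Zm,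
        (∑ w, M.f c x (medTake Zm z c) (βa c) w * D1 (Function.update z c w)) = D2 z := by
      intro z
      simp only [hD1, hD2]
      rw [Bdesc_step M aZ c (K - (k : ℕ)) (by rw [hcv]; omega) (by omega) (by omega) x z y₀]
      have hcs : Fin.castSucc c = k := Fin.ext (by simp [hcdef])
      rw [hcs]
    have hstep := step_core M βa c x G D1 (fun z w => hGinv c (le_of_eq hcv.symm) z w)
    rw [sub_eq_zero]
    calc ∑ z : ZVec Zm, mask M βa ((c : ℕ) + 1) x z * (G z * D1 z)
        = ∑ z : ZVec Zm, mask M βa ((c : ℕ) + 1) x z * G z * D1 z :=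
          Finset.sum_congr rfl (fun z _ => by ring)
      _ = ∑ z : ZVec Zm, mask M βa (c : ℕ) x z * G z *
            ∑ w, M.f c x (medTake Zm z c) (βa c) w * D1 (Function.update z c w) := hstep
      _ = ∑ z : ZVec Zm, mask M βa (c : ℕ) x z * (G z * D2 z) := by
          apply Finset.sum_congr rfl
          intro z _
          rw [htower z]
          ring
  · -- outcome case : (k : ℕ) = K
    have hkK : (k : ℕ) = K := by
      have := k.isLt
      omega
    have hklast : k = Fin.last K := Fin.ext (by simpa using hkK)
    subst hklast
    rw [show K - ((Fin.last K : Fin (K + 1)) : ℕ) = 0 from by simp,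
      show K + 1 - ((Fin.last K : Fin (K + 1)) : ℕ) = 1 from by simp]
    apply Finset.sum_eq_zero
    intro z _
    simp only [Bdesc]
    set S := ∑ y' : ↥𝒴, M.fY x z (aZ (Fin.last K)) y' * (y' : ℝ) with hS
    have hring : ∀ y : ↥𝒴,
        (∏ j, M.f j x (medTake Zm z j) (aZ (Fin.last K)) (z j)) *
            M.fY x z (aZ (Fin.last K)) y *
          (RkP M aZ a0 (Fin.last K) x (takeAt Zm z (Fin.last K)) * ((y : ℝ) - S))
        = ((∏ j, M.f j x (medTake Zm z j) (aZ (Fin.last K)) (z j)) *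
              RkP M aZ a0 (Fin.last K) x (takeAt Zm z (Fin.last K))) *
            (M.fY x z (aZ (Fin.last K)) y * (y : ℝ))
          - ((∏ j, M.f j x (medTake Zm z j) (aZ (Fin.last K)) (z j)) *
              RkP M aZ a0 (Fin.last K) x (takeAt Zm z (Fin.last K)) * S) *
            M.fY x z (aZ (Fin.last K)) y := by
      intro y
      ring
    rw [Finset.sum_congr rfl (fun y _ => hring y), Finset.sum_sub_distrib,
      ← Finset.mul_sum, ← Finset.mul_sum, ← hS, M.fY_sum, mul_one]
    ring

end Aux

/-- the influence function has mean zero under the observed data law: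
`E[Φ(O)] = Σ_o p(o)·Φ(o) = 0`. -/
theorem statement_2 [Nonempty 𝒳] [∀ k, Nonempty (Zm k)] (h𝒴 : 𝒴.Nonempty)
    (M : Model K 𝒳 Zm 𝒴) (aZ : Fin (K + 1) → Bool) (a0 : Bool) :
    ∑ x, ∑ a, ∑ z : ZVec Zm, ∑ y : ↥𝒴,
      jointp M x a z y * Phi M aZ a0 x a z y = 0 := by
  classical
  have hY : Nonempty ↥𝒴 := ⟨⟨h𝒴.choose, h𝒴.choose_spec⟩⟩
  obtain ⟨y₀⟩ := hY
  obtain ⟨z₀⟩ : Nonempty (ZVec Zm) := ⟨fun j => Classical.arbitrary _⟩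
  -- factorization of the joint law
  have hfact : ∀ (x : 𝒳) (a : Bool) (g : ZVec Zm → ↥𝒴 → ℝ),
      ∑ z : ZVec Zm, ∑ y : ↥𝒴, jointp M x a z y * g z y
        = M.q x * M.pi a x * ∑ z : ZVec Zm, ∑ y : ↥𝒴,
            (∏ j, M.f j x (medTake Zm z j) a (z j)) * M.fY x z a y * g z y := by
    intro x a g
    rw [Finset.mul_sum]
    refine Finset.sum_congr rfl (fun z _ => ?_)
    rw [Finset.mul_sum]
    refine Finset.sum_congr rfl (fun y _ => ?_)
    rw [jointp]
    ring
  have hdistrib : ∀ (S e1 e2 e3 p q : ℝ),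
      q * (S + e1 + e2 + e3 - p) = q * S + q * e1 + q * e2 + q * e3 - q * p := by
    intros; ring
  have hsplit : ∀ (x : 𝒳) (a : Bool) (z : ZVec Zm) (y : ↥𝒴),
      jointp M x a z y * Phi M aZ a0 x a z y
        = (∑ k : Fin (K + 1), jointp M x a z y *
              ((if a = aZ k then (1 : ℝ) else 0) * RkP M aZ a0 k x (takeAt Zm z k) *
                (Bdesc M aZ (K - (k : ℕ)) x z y - Bdesc M aZ (K + 1 - (k : ℕ)) x z y)))
          + jointp M x a z y *
              (((if a = !a0 then (1 : ℝ) else 0) - M.pi (!a0) x) * Bdesc M aZ (K + 1) x z y)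
          + jointp M x a z y * (M.pi (!a0) x * Bdesc M aZ (K + 1) x z y)
          + jointp M x a z y * (if a = a0 then (y : ℝ) else 0)
          - jointp M x a z y * psi M aZ a0 := by
    intro x a z y
    simp only [Phi]
    rw [hdistrib, Finset.mul_sum]
  rw [Finset.sum_congr rfl (fun x _ => Finset.sum_congr rfl (fun a _ =>
    Finset.sum_congr rfl (fun z _ => Finset.sum_congr rfl (fun y _ => hsplit x a z y))))]
  simp only [Finset.sum_add_distrib, Finset.sum_sub_distrib]
  have hπb : ∀ x : 𝒳, M.pi true x + M.pi false x = 1 := by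
    intro x
    have := M.pi_sum x
    rwa [Fintype.sum_bool] at this
  -- the sequential-regression terms have mean zero
  have hTA : ∑ x : 𝒳, ∑ a : Bool, ∑ z : ZVec Zm, ∑ y : ↥𝒴, ∑ k : Fin (K + 1),
      jointp M x a z y *
        ((if a = aZ k then (1 : ℝ) else 0) * RkP M aZ a0 k x (takeAt Zm z k) *
          (Bdesc M aZ (K - (k : ℕ)) x z y - Bdesc M aZ (K + 1 - (k : ℕ)) x z y)) = 0 := by
    apply Finset.sum_eq_zero; intro x _
    apply Finset.sum_eq_zero; intro a _
    have hswap : ∑ z : ZVec Zm, ∑ y : ↥𝒴, ∑ k : Fin (K + 1),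
        jointp M x a z y *
          ((if a = aZ k then (1 : ℝ) else 0) * RkP M aZ a0 k x (takeAt Zm z k) *
            (Bdesc M aZ (K - (k : ℕ)) x z y - Bdesc M aZ (K + 1 - (k : ℕ)) x z y))
        = ∑ k : Fin (K + 1), ∑ z : ZVec Zm, ∑ y : ↥𝒴,
            jointp M x a z y *
              ((if a = aZ k then (1 : ℝ) else 0) * RkP M aZ a0 k x (takeAt Zm z k) *
                (Bdesc M aZ (K - (k : ℕ)) x z y - Bdesc M aZ (K + 1 - (k : ℕ)) x z y)) := by
      rw [Finset.sum_congr rfl (fun z (_ : z ∈ Finset.univ) => Finset.sum_comm)]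
      exact Finset.sum_comm
    rw [hswap]
    apply Finset.sum_eq_zero; intro k _
    by_cases ha : a = aZ k
    · subst ha
      calc ∑ z : ZVec Zm, ∑ y : ↥𝒴,
          jointp M x (aZ k) z y *
            ((if aZ k = aZ k then (1 : ℝ) else 0) * RkP M aZ a0 k x (takeAt Zm z k) *
              (Bdesc M aZ (K - (k : ℕ)) x z y - Bdesc M aZ (K + 1 - (k : ℕ)) x z y))
          = ∑ z : ZVec Zm, ∑ y : ↥𝒴,
              jointp M x (aZ k) z y *
                (RkP M aZ a0 k x (takeAt Zm z k) *
                  (Bdesc M aZ (K - (k : ℕ)) x z y - Bdesc M aZ (K + 1 - (k : ℕ)) x z y)) :=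
            Finset.sum_congr rfl (fun z _ => Finset.sum_congr rfl (fun y _ => by
              rw [if_pos rfl, one_mul]))
        _ = M.q x * M.pi (aZ k) x * ∑ z : ZVec Zm, ∑ y : ↥𝒴,
              (∏ j, M.f j x (medTake Zm z j) (aZ k) (z j)) * M.fY x z (aZ k) y *
                (RkP M aZ a0 k x (takeAt Zm z k) *
                  (Bdesc M aZ (K - (k : ℕ)) x z y - Bdesc M aZ (K + 1 - (k : ℕ)) x z y)) :=
            hfact x (aZ k) _
        _ = 0 := by rw [term_zero M aZ a0 x y₀ k, mul_zero]
    · apply Finset.sum_eq_zero; intro z _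
      apply Finset.sum_eq_zero; intro y _
      rw [if_neg ha]
      ring
  -- the augmentation term has mean zero
  have hTB : ∑ x : 𝒳, ∑ a : Bool, ∑ z : ZVec Zm, ∑ y : ↥𝒴,
      jointp M x a z y *
        (((if a = !a0 then (1 : ℝ) else 0) - M.pi (!a0) x) * Bdesc M aZ (K + 1) x z y)
        = 0 := by
    apply Finset.sum_eq_zero; intro x _
    have hstep : ∀ a : Bool, ∑ z : ZVec Zm, ∑ y : ↥𝒴,
        jointp M x a z y *
          (((if a = !a0 then (1 : ℝ) else 0) - M.pi (!a0) x) * Bdesc M aZ (K + 1) x z y)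
        = M.q x * M.pi a x *
            (((if a = !a0 then (1 : ℝ) else 0) - M.pi (!a0) x) *
              Bdesc M aZ (K + 1) x z₀ y₀) := by
      intro a
      calc ∑ z : ZVec Zm, ∑ y : ↥𝒴,
          jointp M x a z y *
            (((if a = !a0 then (1 : ℝ) else 0) - M.pi (!a0) x) * Bdesc M aZ (K + 1) x z y)
          = M.q x * M.pi a x * ∑ z : ZVec Zm, ∑ y : ↥𝒴,
              (∏ j, M.f j x (medTake Zm z j) a (z j)) * M.fY x z a y *
                (((if a = !a0 then (1 : ℝ) else 0) - M.pi (!a0) x) *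
                  Bdesc M aZ (K + 1) x z y) := hfact x a _
        _ = M.q x * M.pi a x *
              (((if a = !a0 then (1 : ℝ) else 0) - M.pi (!a0) x) *
                ∑ z : ZVec Zm, ∑ y : ↥𝒴,
                  (∏ j, M.f j x (medTake Zm z j) a (z j)) * M.fY x z a y *
                    Bdesc M aZ (K + 1) x z y) := by
            congr 1
            rw [Finset.mul_sum]
            refine Finset.sum_congr rfl (fun z _ => ?_)
            rw [Finset.mul_sum]
            exact Finset.sum_congr rfl (fun y _ => by ring)
        _ = M.q x * M.pi a x *
              (((if a = !a0 then (1 : ℝ) else 0) - M.pi (!a0) x) *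
                Bdesc M aZ (K + 1) x z₀ y₀) := by
            rw [EB1 M aZ x a z₀ y₀]
    rw [Finset.sum_congr rfl (fun a (_ : a ∈ Finset.univ) => hstep a), Fintype.sum_bool]
    have hπ := hπb x
    cases a0 with
    | false =>
      simp only [Bool.not_false, if_pos rfl]
      norm_num
      linear_combination (-(M.q x * M.pi true x * Bdesc M aZ (K + 1) x z₀ y₀)) * hπ
    | true =>
      simp only [Bool.not_true]
      norm_num
      linear_combination (-(M.q x * M.pi false x * Bdesc M aZ (K + 1) x z₀ y₀)) * hπ
  -- the plug-in term
  have hTC : ∑ x : 𝒳, ∑ a : Bool, ∑ z : ZVec Zm, ∑ y : ↥𝒴,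
      jointp M x a z y * (M.pi (!a0) x * Bdesc M aZ (K + 1) x z y)
        = ∑ x : 𝒳, M.q x * M.pi (!a0) x * Bdesc M aZ (K + 1) x z₀ y₀ := by
    refine Finset.sum_congr rfl (fun x _ => ?_)
    have hstep : ∀ a : Bool, ∑ z : ZVec Zm, ∑ y : ↥𝒴,
        jointp M x a z y * (M.pi (!a0) x * Bdesc M aZ (K + 1) x z y)
        = M.q x * M.pi a x * (M.pi (!a0) x * Bdesc M aZ (K + 1) x z₀ y₀) := by
      intro a
      calc ∑ z : ZVec Zm, ∑ y : ↥𝒴,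
          jointp M x a z y * (M.pi (!a0) x * Bdesc M aZ (K + 1) x z y)
          = M.q x * M.pi a x * ∑ z : ZVec Zm, ∑ y : ↥𝒴,
              (∏ j, M.f j x (medTake Zm z j) a (z j)) * M.fY x z a y *
                (M.pi (!a0) x * Bdesc M aZ (K + 1) x z y) := hfact x a _
        _ = M.q x * M.pi a x *
              (M.pi (!a0) x * ∑ z : ZVec Zm, ∑ y : ↥𝒴,
                (∏ j, M.f j x (medTake Zm z j) a (z j)) * M.fY x z a y *
                  Bdesc M aZ (K + 1) x z y) := by
            congr 1
            rw [Finset.mul_sum]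
            refine Finset.sum_congr rfl (fun z _ => ?_)
            rw [Finset.mul_sum]
            exact Finset.sum_congr rfl (fun y _ => by ring)
        _ = M.q x * M.pi a x * (M.pi (!a0) x * Bdesc M aZ (K + 1) x z₀ y₀) := by
            rw [EB1 M aZ x a z₀ y₀]
    rw [Finset.sum_congr rfl (fun a (_ : a ∈ Finset.univ) => hstep a), Fintype.sum_bool]
    have hπ := hπb x
    linear_combination (M.q x * (M.pi (!a0) x * Bdesc M aZ (K + 1) x z₀ y₀)) * hπ
  -- total mass one against the constant `ψ`
  have hTE : ∑ x : 𝒳, ∑ a : Bool, ∑ z : ZVec Zm, ∑ y : ↥𝒴,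
      jointp M x a z y * psi M aZ a0 = psi M aZ a0 := by
    have hstep : ∀ (x : 𝒳) (a : Bool), ∑ z : ZVec Zm, ∑ y : ↥𝒴,
        jointp M x a z y * psi M aZ a0 = M.q x * M.pi a x * psi M aZ a0 := by
      intro x a
      calc ∑ z : ZVec Zm, ∑ y : ↥𝒴, jointp M x a z y * psi M aZ a0
          = M.q x * M.pi a x * ∑ z : ZVec Zm, ∑ y : ↥𝒴,
              (∏ j, M.f j x (medTake Zm z j) a (z j)) * M.fY x z a y * psi M aZ a0 :=
            hfact x a _
        _ = M.q x * M.pi a x *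
              ((∑ z : ZVec Zm, ∑ y : ↥𝒴,
                (∏ j, M.f j x (medTake Zm z j) a (z j)) * M.fY x z a y) * psi M aZ a0) := by
            rw [Finset.sum_mul]
            congr 1
            exact Finset.sum_congr rfl (fun z _ => by rw [Finset.sum_mul])
        _ = M.q x * M.pi a x * psi M aZ a0 := by rw [sum_W_one, one_mul]
    calc ∑ x : 𝒳, ∑ a : Bool, ∑ z : ZVec Zm, ∑ y : ↥𝒴, jointp M x a z y * psi M aZ a0
        = ∑ x : 𝒳, M.q x * psi M aZ a0 := by
          refine Finset.sum_congr rfl (fun x _ => ?_)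
          rw [Finset.sum_congr rfl (fun a (_ : a ∈ Finset.univ) => hstep x a),
            Fintype.sum_bool]
          linear_combination (M.q x * psi M aZ a0) * hπb x
      _ = psi M aZ a0 := by rw [← Finset.sum_mul, M.q_sum, one_mul]
  rw [hTA, hTB, hTC, hTE]
  rw [psi]
  rw [Finset.sum_congr rfl (fun x (_ : x ∈ Finset.univ) => by
    rw [psi1_rep M aZ x z₀ y₀] :
      ∀ x ∈ Finset.univ, M.q x * M.pi (!a0) x *
        (∑ z : ZVec Zm, ∑ y : ↥𝒴, (y : ℝ) * ∏ k, ker M k x z y (aZ k))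
        = M.q x * M.pi (!a0) x * Bdesc M aZ (K + 1) x z₀ y₀)]
  ring

end ChainCausal
end

section
/- In the discrete chain-factorized causal model, for every k ∈ {1, …, K+1} and every function φ : 𝒳 × 𝒵₁ × ⋯ × 𝒵_{k−1} → ℝ, multiplying by the indicator of A = a_{Z_k} and by the density-ratio product R_k implements the intervened law in which each mediator Z_j follows its kernel at level a_{Z_j} and the treatment factor is π(a₁∣x): E[1{A = a_{Z_k}} · R_k(X, Z_{1:k−1}) · φ(X, Z_{1:k−1})] = Σ_{x, z_{1:k−1}} q(x)·π(a₁∣x)·∏_{j=1}^{k−1} f_j(z_j∣x, z_{1:j−1}, a_{Z_j}) · φ(x, z_{1:k−1}). -/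
/-!
Discrete chain-factorized causal model: the observed vector is
`O = (X, A, Z₁, …, Z_K, Y)` with `A` binary (modeled by `Bool`, with `a₁ := !a₀`),
with joint pmf
`p(x,a,z₁,…,z_K,y) = q(x)·π(a∣x)·∏_{k=1}^K f_k(z_k∣x,z_{1:k−1},a)·f_{K+1}(y∣x,z_{1:K},a)`,
where all kernels are strictly positive pmfs; the outcome takes values in a nonempty
finite set `𝒴 ⊆ ℝ`.
-/

namespace ChainCausal

variable {K : ℕ}

variable {𝒳 : Type} [Fintype 𝒳] {Zm : Fin K → Type} [∀ k, Fintype (Zm k)]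
  {𝒴 : Finset ℝ}

section Aux

variable {K : ℕ} {Zm : Fin K → Type} [∀ j, Fintype (Zm j)]

/-- Equiv between the subtype-pi presentation of prefixes and `PrefAt`. -/
def prefEquiv (k : Fin (K + 1)) :
    (∀ j : {x : Fin K // (x : ℕ) < (k : ℕ)}, Zm j.1) ≃ PrefAt Zm k where
  toFun u := fun j => u ⟨emb k j, j.isLt⟩
  invFun h := fun j => h ⟨j.1.1, j.2⟩
  left_inv _ := rfl
  right_inv _ := rfl

def idxEquiv (k : Fin (K + 1)) : Fin (k : ℕ) ≃ {x : Fin K // (x : ℕ) < (k : ℕ)} where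
  toFun j := ⟨emb k j, j.isLt⟩
  invFun j := ⟨j.1.1, j.2⟩
  left_inv _ := rfl
  right_inv _ := rfl

lemma prod_filter_lt (k : Fin (K + 1)) (G : Fin K → ℝ) :
    ∏ j ∈ Finset.univ.filter (fun j : Fin K => (j : ℕ) < (k : ℕ)), G j
      = ∏ j : Fin (k : ℕ), G (emb k j) := by
  classical
  rw [Finset.prod_subtype (p := fun j : Fin K => (j : ℕ) < (k : ℕ))
      (Finset.univ.filter fun j : Fin K => (j : ℕ) < (k : ℕ)) (fun j => by simp) G]
  exact (Fintype.prod_equiv (idxEquiv k) (fun j => G (emb k j)) (fun j => G j.1)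
    (fun j => rfl)).symm

lemma sum_prefix (k : Fin (K + 1)) (Ψ : PrefAt Zm k → ℝ) :
    ∑ z : ZVec Zm, Ψ (takeAt Zm z k)
      = (∏ j ∈ Finset.univ.filter (fun j : Fin K => ¬ (j : ℕ) < (k : ℕ)),
          (Fintype.card (Zm j) : ℝ)) * ∑ h : PrefAt Zm k, Ψ h := by
  classical
  set p : Fin K → Prop := fun j => (j : ℕ) < (k : ℕ) with hp
  set e := Equiv.piEquivPiSubtypeProd p Zm with he
  rw [← Equiv.sum_comp e.symm (fun z => Ψ (takeAt Zm z k))]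
  rw [Fintype.sum_prod_type]
  have key : ∀ (u : ∀ j : {x // p x}, Zm j.1) (t : ∀ j : {x // ¬ p x}, Zm j.1),
      takeAt Zm (e.symm (u, t)) k = prefEquiv k u := by
    intro u t
    funext j
    show (if h : p (emb k j) then u ⟨emb k j, h⟩ else t ⟨emb k j, h⟩) = u ⟨emb k j, j.isLt⟩
    exact dif_pos j.isLt
  have hcard : (Fintype.card (∀ j : {x // ¬ p x}, Zm j.1) : ℝ)
      = ∏ j ∈ Finset.univ.filter (fun j : Fin K => ¬ (j : ℕ) < (k : ℕ)),
          (Fintype.card (Zm j) : ℝ) := by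
    rw [Fintype.card_pi]
    push_cast
    rw [Finset.prod_subtype (p := fun j : Fin K => ¬ (j : ℕ) < (k : ℕ))
      (Finset.univ.filter fun j : Fin K => ¬ (j : ℕ) < (k : ℕ))
      (fun j => by simp) (fun j => (Fintype.card (Zm j) : ℝ))]
  calc ∑ u, ∑ t, Ψ (takeAt Zm (e.symm (u, t)) k)
      = ∑ u : (∀ j : {x // p x}, Zm j.1), ∑ _t : (∀ j : {x // ¬ p x}, Zm j.1),
          Ψ (prefEquiv k u) := by
        refine Finset.sum_congr rfl fun u _ => Finset.sum_congr rfl fun t _ => by rw [key]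
    _ = ∑ u : (∀ j : {x // p x}, Zm j.1),
          (Fintype.card (∀ j : {x // ¬ p x}, Zm j.1) : ℝ) * Ψ (prefEquiv k u) := by
        refine Finset.sum_congr rfl fun u _ => ?_
        rw [Finset.sum_const, nsmul_eq_mul, Finset.card_univ]
    _ = (Fintype.card (∀ j : {x // ¬ p x}, Zm j.1) : ℝ)
          * ∑ u : (∀ j : {x // p x}, Zm j.1), Ψ (prefEquiv k u) := by
        rw [Finset.mul_sum]
    _ = _ := by rw [hcard, Equiv.sum_comp (prefEquiv k) Ψ]

lemma chain_marginal [∀ j, Nonempty (Zm j)]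
    (g : (j : Fin K) → MedPref Zm j → Zm j → ℝ)
    (hg : ∀ j p, ∑ w, g j p w = 1) (k : Fin (K + 1)) (φ : PrefAt Zm k → ℝ) :
    ∑ z : ZVec Zm, (∏ j, g j (medTake Zm z j) (z j)) * φ (takeAt Zm z k)
      = ∑ h : PrefAt Zm k,
          (∏ j : Fin (k : ℕ), g (emb k j) (subPref k h j) (h j)) * φ h := by
  classical
  set T : ℕ → ℝ := fun m => ∑ z : ZVec Zm,
    (∏ j ∈ Finset.univ.filter (fun j : Fin K => (j : ℕ) < m),
      g j (medTake Zm z j) (z j)) * φ (takeAt Zm z k) with hT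
  set C : ℕ → ℝ := fun m =>
    ∏ j ∈ Finset.univ.filter (fun j : Fin K => ¬ (j : ℕ) < m),
      (Fintype.card (Zm j) : ℝ) with hC
  set R : ℝ := ∑ h : PrefAt Zm k,
    (∏ j : Fin (k : ℕ), g (emb k j) (subPref k h j) (h j)) * φ h with hR
  have base : T (k : ℕ) = C (k : ℕ) * R := by
    have h1 : ∀ z : ZVec Zm,
        (∏ j ∈ Finset.univ.filter (fun j : Fin K => (j : ℕ) < (k : ℕ)),
          g j (medTake Zm z j) (z j)) * φ (takeAt Zm z k)
        = (fun h : PrefAt Zm k =>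
            (∏ j : Fin (k : ℕ), g (emb k j) (subPref k h j) (h j)) * φ h)
            (takeAt Zm z k) := by
      intro z
      rw [prod_filter_lt]
      rfl
    simp only [hT, h1]
    exact sum_prefix k (fun h : PrefAt Zm k =>
      (∏ j : Fin (k : ℕ), g (emb k j) (subPref k h j) (h j)) * φ h)
  have step : ∀ n : ℕ, (k : ℕ) ≤ n → T n = C n * R → T (n + 1) = C (n + 1) * R := by
    intro n hkn ih
    by_cases hnK : n < K
    · set i : Fin K := ⟨n, hnK⟩ with hi
      have hins : Finset.univ.filter (fun j : Fin K => (j : ℕ) < n + 1)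
          = insert i (Finset.univ.filter (fun j : Fin K => (j : ℕ) < n)) := by
        ext j
        simp only [Finset.mem_filter, Finset.mem_insert, Finset.mem_univ, true_and,
          Fin.ext_iff, hi]
        omega
      have hnotmem : i ∉ Finset.univ.filter (fun j : Fin K => (j : ℕ) < n) := by
        simp [hi]
      have hCins : Finset.univ.filter (fun j : Fin K => ¬ (j : ℕ) < n)
          = insert i (Finset.univ.filter (fun j : Fin K => ¬ (j : ℕ) < n + 1)) := by
        ext j
        simp only [Finset.mem_filter, Finset.mem_insert, Finset.mem_univ, true_and,
          Fin.ext_iff, hi, not_lt]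
        omega
      have hCnotmem : i ∉ Finset.univ.filter (fun j : Fin K => ¬ (j : ℕ) < n + 1) := by
        simp [hi]
      have hCstep : C n = (Fintype.card (Zm i) : ℝ) * C (n + 1) := by
        simp only [hC]
        rw [hCins, Finset.prod_insert hCnotmem]
      set e := Equiv.piSplitAt i Zm with he
      have hagree : ∀ (w w' : Zm i) (t : ∀ j : {j : Fin K // j ≠ i}, Zm j.1)
          (j : Fin K), (j : ℕ) < n → e.symm (w, t) j = e.symm (w', t) j := by
        intro w w' t j hj
        have hji : j ≠ i := by
          intro h; rw [h] at hj; exact lt_irrefl _ hj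
        simp only [he, Equiv.piSplitAt_symm_apply, dif_neg hji]
      have w0 : Zm i := Classical.arbitrary _
      set zt : (∀ j : {j : Fin K // j ≠ i}, Zm j.1) → ZVec Zm :=
        fun t => e.symm (w0, t) with hzt
      have hmed : ∀ (w : Zm i) t (j : Fin K), (j : ℕ) ≤ n →
          medTake Zm (e.symm (w, t)) j = medTake Zm (zt t) j := by
        intro w t j hj
        funext l
        exact hagree w w0 t _ (lt_of_lt_of_le l.isLt hj)
      have htake : ∀ (w : Zm i) t, takeAt Zm (e.symm (w, t)) k = takeAt Zm (zt t) k := by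
        intro w t
        funext l
        exact hagree w w0 t _ (lt_of_lt_of_le l.isLt hkn)
      have hei : ∀ (w : Zm i) t, e.symm (w, t) i = w := by
        intro w t
        simp [he, Equiv.piSplitAt_symm_apply]
      set B : (∀ j : {j : Fin K // j ≠ i}, Zm j.1) → ℝ := fun t =>
        (∏ j ∈ Finset.univ.filter (fun j : Fin K => (j : ℕ) < n),
          g j (medTake Zm (zt t) j) (zt t j)) * φ (takeAt Zm (zt t) k) with hB
      have hBeq : ∀ (w : Zm i) t,
          (∏ j ∈ Finset.univ.filter (fun j : Fin K => (j : ℕ) < n),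
            g j (medTake Zm (e.symm (w, t)) j) (e.symm (w, t) j))
            * φ (takeAt Zm (e.symm (w, t)) k) = B t := by
        intro w t
        rw [htake w t]
        congr 1
        refine Finset.prod_congr rfl fun j hj => ?_
        have hj' : (j : ℕ) < n := by simpa using hj
        rw [hmed w t j hj'.le, hagree w w0 t j hj']
      have hTn : T n = (Fintype.card (Zm i) : ℝ) * ∑ t, B t := by
        simp only [hT]
        rw [← Equiv.sum_comp e.symm (fun z =>
          (∏ j ∈ Finset.univ.filter (fun j : Fin K => (j : ℕ) < n),
            g j (medTake Zm z j) (z j)) * φ (takeAt Zm z k)), Fintype.sum_prod_type]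
        calc ∑ w, ∑ t, (∏ j ∈ Finset.univ.filter (fun j : Fin K => (j : ℕ) < n),
              g j (medTake Zm (e.symm (w, t)) j) (e.symm (w, t) j))
              * φ (takeAt Zm (e.symm (w, t)) k)
            = ∑ _w : Zm i, ∑ t, B t := by
              refine Finset.sum_congr rfl fun w _ => Finset.sum_congr rfl fun t _ => ?_
              exact hBeq w t
          _ = (Fintype.card (Zm i) : ℝ) * ∑ t, B t := by
              rw [Finset.sum_const, nsmul_eq_mul, Finset.card_univ]
      have hTn1 : T (n + 1) = ∑ t, B t := by
        simp only [hT]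
        rw [← Equiv.sum_comp e.symm (fun z =>
          (∏ j ∈ Finset.univ.filter (fun j : Fin K => (j : ℕ) < n + 1),
            g j (medTake Zm z j) (z j)) * φ (takeAt Zm z k)), Fintype.sum_prod_type]
        have hterm : ∀ (w : Zm i) t,
            (∏ j ∈ Finset.univ.filter (fun j : Fin K => (j : ℕ) < n + 1),
              g j (medTake Zm (e.symm (w, t)) j) (e.symm (w, t) j))
              * φ (takeAt Zm (e.symm (w, t)) k)
            = g i (medTake Zm (zt t) i) w * B t := by
          intro w t
          rw [hins, Finset.prod_insert hnotmem, mul_assoc, hBeq w t, hei w t,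
            hmed w t i le_rfl]
        calc ∑ w, ∑ t, (∏ j ∈ Finset.univ.filter (fun j : Fin K => (j : ℕ) < n + 1),
              g j (medTake Zm (e.symm (w, t)) j) (e.symm (w, t) j))
              * φ (takeAt Zm (e.symm (w, t)) k)
            = ∑ w, ∑ t, g i (medTake Zm (zt t) i) w * B t := by
              refine Finset.sum_congr rfl fun w _ => Finset.sum_congr rfl fun t _ => ?_
              exact hterm w t
          _ = ∑ t, ∑ w, g i (medTake Zm (zt t) i) w * B t := Finset.sum_comm
          _ = ∑ t, B t := by
              refine Finset.sum_congr rfl fun t _ => ?_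
              rw [← Finset.sum_mul, hg i _, one_mul]
      have hcard0 : (Fintype.card (Zm i) : ℝ) ≠ 0 := by
        exact_mod_cast Fintype.card_ne_zero
      rw [hTn1]
      apply mul_left_cancel₀ hcard0
      rw [← hTn, ih, hCstep, mul_assoc]
    · push_neg at hnK
      have e1 : Finset.univ.filter (fun j : Fin K => (j : ℕ) < n + 1)
          = Finset.univ.filter (fun j : Fin K => (j : ℕ) < n) := by
        ext j
        have := j.isLt
        simp only [Finset.mem_filter, Finset.mem_univ, true_and]
        omega
      have e2 : Finset.univ.filter (fun j : Fin K => ¬ (j : ℕ) < n + 1)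
          = Finset.univ.filter (fun j : Fin K => ¬ (j : ℕ) < n) := by
        ext j
        have := j.isLt
        simp only [Finset.mem_filter, Finset.mem_univ, true_and]
        omega
      simp only [hT, hC, e1, e2] at ih ⊢
      exact ih
  have main : ∀ m : ℕ, (k : ℕ) ≤ m → T m = C m * R :=
    Nat.le_induction base (fun n hn ih => step n hn ih)
  have hK := main K k.is_le
  have hTK : T K = ∑ z : ZVec Zm, (∏ j, g j (medTake Zm z j) (z j)) * φ (takeAt Zm z k) := by
    simp only [hT]
    refine Finset.sum_congr rfl fun z _ => ?_
    congr 1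
    refine Finset.prod_congr ?_ fun _ _ => rfl
    apply Finset.filter_true_of_mem
    intro j _
    exact j.isLt
  have hCK : C K = 1 := by
    simp only [hC]
    apply Finset.prod_eq_one  -- or filter empty
    intro j hj
    simp only [Finset.mem_filter, not_lt] at hj
    exact absurd hj.2 (not_le.mpr j.isLt)
  rw [← hTK, hK, hCK, one_mul]

end Aux
/-- for every `k ∈ {1,…,K+1}` and every `φ : 𝒳 × 𝒵₁ × ⋯ × 𝒵_{k−1} → ℝ`,
multiplying by `1{A = a_{Z_k}}` and by the density-ratio product `R_k` implements the
intervened law in which each mediator `Z_j` follows its kernel at level `a_{Z_j}` and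
the treatment factor is `π(a₁∣x)`:
`E[1{A=a_{Z_k}}·R_k(X,Z_{1:k−1})·φ(X,Z_{1:k−1})]
  = Σ_{x,z_{1:k−1}} q(x)·π(a₁∣x)·∏_{j=1}^{k−1} f_j(z_j∣x,z_{1:j−1},a_{Z_j})·φ(x,z_{1:k−1})`. -/
theorem statement_4 [Nonempty 𝒳] [∀ k, Nonempty (Zm k)] (h𝒴 : 𝒴.Nonempty)
    (M : Model K 𝒳 Zm 𝒴) (aZ : Fin (K + 1) → Bool) (a0 : Bool)
    (k : Fin (K + 1)) (φ : 𝒳 → PrefAt Zm k → ℝ) :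
    (∑ x, ∑ a, ∑ z : ZVec Zm, ∑ y : ↥𝒴,
        jointp M x a z y * (if a = aZ k then (1 : ℝ) else 0) *
          RkP M aZ a0 k x (takeAt Zm z k) * φ x (takeAt Zm z k)) =
      ∑ x, ∑ h : PrefAt Zm k,
        M.q x * M.pi (!a0) x *
          (∏ j : Fin (k : ℕ),
            M.f (emb k j) x (subPref k h j) (aZ (Fin.castSucc (emb k j))) (h j)) *
          φ x h := by
  classical
  set lev : Fin K → Bool := fun j => if (j : ℕ) < (k : ℕ) then aZ j.castSucc else aZ k
    with hlev
  have hpi : ∀ x, M.pi (aZ k) x * (if aZ k = a0 then frA M a0 x else 1)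
      = M.pi (!a0) x := by
    intro x
    by_cases h0 : aZ k = a0
    · rw [if_pos h0, h0, frA, mul_comm, div_mul_cancel₀ _ (M.pi_pos a0 x).ne']
    · rw [if_neg h0, mul_one]
      have : aZ k = !a0 := by cases a0 <;> cases hkk : aZ k <;> simp_all
      rw [this]
  have ratio_merge : ∀ x (h : PrefAt Zm k) (j : Fin (k : ℕ)),
      M.f (emb k j) x (subPref k h j) (aZ k) (h j) *
        (if aZ (Fin.castSucc (emb k j)) ≠ aZ k then frMedP M aZ k j x h else 1)
      = M.f (emb k j) x (subPref k h j) (aZ (Fin.castSucc (emb k j))) (h j) := by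
    intro x h j
    by_cases hj : aZ (Fin.castSucc (emb k j)) = aZ k
    · rw [if_neg (by simpa using hj), mul_one, hj]
    · rw [if_pos hj]
      have hnot : (!aZ (Fin.castSucc (emb k j))) = aZ k := by
        cases hb : aZ (Fin.castSucc (emb k j)) <;> cases hc : aZ k <;> simp_all
      simp only [frMedP, hnot]
      rw [mul_comm, div_mul_cancel₀ _ (M.f_pos (emb k j) x (subPref k h j) (aZ k) (h j)).ne']
  have hpoint : ∀ x (z : ZVec Zm),
      M.pi (aZ k) x * (∏ j, M.f j x (medTake Zm z j) (aZ k) (z j)) *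
        RkP M aZ a0 k x (takeAt Zm z k)
      = M.pi (!a0) x * ∏ j, M.f j x (medTake Zm z j) (lev j) (z j) := by
    intro x z
    have hsplitK : (∏ j, M.f j x (medTake Zm z j) (aZ k) (z j))
        = (∏ j : Fin (k : ℕ), M.f (emb k j) x (medTake Zm z (emb k j)) (aZ k) (z (emb k j)))
          * ∏ j ∈ Finset.univ.filter (fun j : Fin K => ¬ (j : ℕ) < (k : ℕ)),
              M.f j x (medTake Zm z j) (aZ k) (z j) := by
      rw [← Finset.prod_filter_mul_prod_filter_not Finset.univ
        (fun j : Fin K => (j : ℕ) < (k : ℕ)), prod_filter_lt]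
    have hfin : (∏ j, M.f j x (medTake Zm z j) (lev j) (z j))
        = (∏ j : Fin (k : ℕ), M.f (emb k j) x (medTake Zm z (emb k j))
              (aZ (Fin.castSucc (emb k j))) (z (emb k j)))
          * ∏ j ∈ Finset.univ.filter (fun j : Fin K => ¬ (j : ℕ) < (k : ℕ)),
              M.f j x (medTake Zm z j) (aZ k) (z j) := by
      rw [← Finset.prod_filter_mul_prod_filter_not Finset.univ
        (fun j : Fin K => (j : ℕ) < (k : ℕ)), prod_filter_lt]
      congr 1
      · refine Finset.prod_congr rfl fun j _ => ?_
        rw [show lev (emb k j) = aZ (Fin.castSucc (emb k j)) from if_pos j.isLt]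
      · refine Finset.prod_congr rfl fun j hj => ?_
        rw [show lev j = aZ k from if_neg (by simpa using hj)]
    have hmerge : (∏ j : Fin (k : ℕ),
          M.f (emb k j) x (medTake Zm z (emb k j)) (aZ k) (z (emb k j)))
        * (∏ j : Fin (k : ℕ),
            if aZ (Fin.castSucc (emb k j)) ≠ aZ k then frMedP M aZ k j x (takeAt Zm z k)
            else 1)
        = ∏ j : Fin (k : ℕ), M.f (emb k j) x (medTake Zm z (emb k j))
            (aZ (Fin.castSucc (emb k j))) (z (emb k j)) := by
      rw [← Finset.prod_mul_distrib]
      exact Finset.prod_congr rfl fun j _ => ratio_merge x (takeAt Zm z k) j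
    simp only [RkP]
    rw [hsplitK, hfin, ← hmerge, ← hpi x]
    ring
  have hy : ∀ x (a : Bool) (z : ZVec Zm),
      (∑ y : ↥𝒴, jointp M x a z y * (if a = aZ k then (1 : ℝ) else 0) *
        RkP M aZ a0 k x (takeAt Zm z k) * φ x (takeAt Zm z k))
      = (M.q x * M.pi a x * ∏ j, M.f j x (medTake Zm z j) a (z j)) *
          (if a = aZ k then (1 : ℝ) else 0) *
          RkP M aZ a0 k x (takeAt Zm z k) * φ x (takeAt Zm z k) := by
    intro x a z
    have h1 : ∀ y : ↥𝒴, jointp M x a z y * (if a = aZ k then (1 : ℝ) else 0) *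
        RkP M aZ a0 k x (takeAt Zm z k) * φ x (takeAt Zm z k)
        = ((M.q x * M.pi a x * ∏ j, M.f j x (medTake Zm z j) a (z j)) *
            (if a = aZ k then (1 : ℝ) else 0) *
            RkP M aZ a0 k x (takeAt Zm z k) * φ x (takeAt Zm z k)) * M.fY x z a y := by
      intro y
      simp only [jointp]
      ring
    rw [Finset.sum_congr rfl fun y _ => h1 y, ← Finset.mul_sum, M.fY_sum x z a, mul_one]
  have ha : ∀ x (z : ZVec Zm),
      (∑ a : Bool, (M.q x * M.pi a x * ∏ j, M.f j x (medTake Zm z j) a (z j)) *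
        (if a = aZ k then (1 : ℝ) else 0) *
        RkP M aZ a0 k x (takeAt Zm z k) * φ x (takeAt Zm z k))
      = (M.q x * M.pi (aZ k) x * ∏ j, M.f j x (medTake Zm z j) (aZ k) (z j)) *
          RkP M aZ a0 k x (takeAt Zm z k) * φ x (takeAt Zm z k) := by
    intro x z
    have h2 : ∀ a : Bool, (M.q x * M.pi a x * ∏ j, M.f j x (medTake Zm z j) a (z j)) *
        (if a = aZ k then (1 : ℝ) else 0) *
        RkP M aZ a0 k x (takeAt Zm z k) * φ x (takeAt Zm z k)
        = if a = aZ k then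
            (M.q x * M.pi a x * ∏ j, M.f j x (medTake Zm z j) a (z j)) *
              RkP M aZ a0 k x (takeAt Zm z k) * φ x (takeAt Zm z k)
          else 0 := by
      intro a
      by_cases hh : a = aZ k <;> simp [hh]
    rw [Finset.sum_congr rfl fun a _ => h2 a, Finset.sum_ite_eq' Finset.univ (aZ k)]
    simp
  have hx : ∀ x, (∑ z : ZVec Zm,
      (M.q x * M.pi (aZ k) x * ∏ j, M.f j x (medTake Zm z j) (aZ k) (z j)) *
        RkP M aZ a0 k x (takeAt Zm z k) * φ x (takeAt Zm z k))
      = ∑ h : PrefAt Zm k, M.q x * M.pi (!a0) x *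
          (∏ j : Fin (k : ℕ),
            M.f (emb k j) x (subPref k h j) (aZ (Fin.castSucc (emb k j))) (h j)) *
          φ x h := by
    intro x
    have hcm := chain_marginal (fun j p w => M.f j x p (lev j) w)
      (fun j p => M.f_sum j x p (lev j)) k
      (fun h => M.q x * M.pi (!a0) x * φ x h)
    calc (∑ z : ZVec Zm,
        (M.q x * M.pi (aZ k) x * ∏ j, M.f j x (medTake Zm z j) (aZ k) (z j)) *
          RkP M aZ a0 k x (takeAt Zm z k) * φ x (takeAt Zm z k))
        = ∑ z : ZVec Zm, (∏ j, M.f j x (medTake Zm z j) (lev j) (z j)) *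
            (M.q x * M.pi (!a0) x * φ x (takeAt Zm z k)) := by
          refine Finset.sum_congr rfl fun z _ => ?_
          have hp := hpoint x z
          calc M.q x * M.pi (aZ k) x * (∏ j, M.f j x (medTake Zm z j) (aZ k) (z j)) *
              RkP M aZ a0 k x (takeAt Zm z k) * φ x (takeAt Zm z k)
              = M.q x * (M.pi (aZ k) x * (∏ j, M.f j x (medTake Zm z j) (aZ k) (z j)) *
                  RkP M aZ a0 k x (takeAt Zm z k)) * φ x (takeAt Zm z k) := by ring
            _ = M.q x * (M.pi (!a0) x * ∏ j, M.f j x (medTake Zm z j) (lev j) (z j)) *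
                  φ x (takeAt Zm z k) := by rw [hp]
            _ = (∏ j, M.f j x (medTake Zm z j) (lev j) (z j)) *
                  (M.q x * M.pi (!a0) x * φ x (takeAt Zm z k)) := by ring
      _ = ∑ h : PrefAt Zm k, (∏ j : Fin (k : ℕ),
            M.f (emb k j) x (subPref k h j) (lev (emb k j)) (h j)) *
            (M.q x * M.pi (!a0) x * φ x h) := hcm
      _ = ∑ h : PrefAt Zm k, M.q x * M.pi (!a0) x *
            (∏ j : Fin (k : ℕ),
              M.f (emb k j) x (subPref k h j) (aZ (Fin.castSucc (emb k j))) (h j)) *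
            φ x h := by
          refine Finset.sum_congr rfl fun h _ => ?_
          rw [Finset.prod_congr rfl fun (j : Fin (k : ℕ)) _ => by
            rw [show lev (emb k j) = aZ (Fin.castSucc (emb k j)) from if_pos j.isLt]]
          ring
  refine Finset.sum_congr rfl fun x _ => ?_
  rw [Finset.sum_congr rfl fun a _ => Finset.sum_congr rfl fun z (_ : z ∈ Finset.univ) =>
    hy x a z, Finset.sum_comm, Finset.sum_congr rfl fun z _ => ha x z, hx x]

end ChainCausal
end

section
/- Let (Ω, ℱ, P) be a probability space, 𝔊 ⊆ ℱ a sub-σ-algebra, Y : Ω → ℝ with E[Y²] < ∞, and μ_Y := E[Y ∣ 𝔊] the conditional expectation. Let R : Ω → ℝ be 𝔊-measurable with 0 ≤ R ≤ C almost surely for some C ≥ 0, and let g : Ω → ℝ be 𝔊-measurable with E[g²] < ∞. Then E[R·(Y − g)²] = E[R·(Y − μ_Y)²] + E[R·(μ_Y − g)²]; in particular E[R·(Y − g)²] ≥ E[R·(Y − μ_Y)²], i.e., the conditional expectation minimizes the weighted squared-error risk over 𝔊-measurable candidates. -/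
/-!
Expanding `(Y - g)²` around `μ_Y = E[Y | 𝔊]` leaves the cross term `E[R (μ_Y - g) (Y - μ_Y)]`.
It vanishes because the `𝔊`-measurable factor `R (μ_Y - g)` pulls out of `E[· | 𝔊]` and
`E[Y - μ_Y | 𝔊] = 0`; boundedness of `R` and square integrability make every term integrable.
-/

namespace MeasureTheory

variable {Ω : Type*} {m m₀ : MeasurableSpace Ω} {μ : Measure[m₀] Ω}

lemma condExp_sub_condExp_ae_eq_zero (hm : m ≤ m₀) [SigmaFinite (μ.trim hm)] {f : Ω → ℝ}
    (hf : Integrable f μ) : μ[f - μ[f|m]|m] =ᵐ[μ] 0 := by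
  filter_upwards [condExp_sub hf (integrable_condExp (m := m) (f := f)) m,
    condExp_condExp_of_le (f := f) le_rfl hm] with ω hsub hidem
  simp [hsub, hidem]

lemma integral_mul_sub_condExp_eq_zero (hm : m ≤ m₀) [SigmaFinite (μ.trim hm)] {f h : Ω → ℝ}
    (hh : StronglyMeasurable[m] h) (hf : Integrable f μ)
    (hhf : Integrable (h * (f - μ[f|m])) μ) :
    ∫ ω, h ω * (f ω - μ[f|m] ω) ∂μ = 0 := by
  have hpull : μ[h * (f - μ[f|m])|m] =ᵐ[μ] 0 := by
    filter_upwards [condExp_mul_of_stronglyMeasurable_left hh hhf (hf.sub integrable_condExp),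
      condExp_sub_condExp_ae_eq_zero hm hf] with ω hmul hzero
    simp [hmul, hzero]
  calc ∫ ω, h ω * (f ω - μ[f|m] ω) ∂μ = ∫ ω, μ[h * (f - μ[f|m])|m] ω ∂μ :=
        (integral_condExp hm).symm
    _ = 0 := by simp [integral_congr_ae hpull]

lemma integral_mul_sq_sub_eq_add [IsFiniteMeasure μ] (hm : m ≤ m₀) {Y R g : Ω → ℝ} {C : ℝ}
    (hY : MemLp Y 2 μ) (hR : StronglyMeasurable[m] R) (hR_bd : ∀ᵐ ω ∂μ, ‖R ω‖ ≤ C)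
    (hg_meas : StronglyMeasurable[m] g) (hg : MemLp g 2 μ) :
    ∫ ω, R ω * (Y ω - g ω) ^ 2 ∂μ =
      ∫ ω, R ω * (Y ω - μ[Y|m] ω) ^ 2 ∂μ + ∫ ω, R ω * (μ[Y|m] ω - g ω) ^ 2 ∂μ := by
  set Z := μ[Y|m]
  have hZ : MemLp Z 2 μ := hY.condExp one_le_two
  have hR' : AEStronglyMeasurable R μ := (hR.mono hm).aestronglyMeasurable
  have weighted {u : Ω → ℝ} (hu : Integrable u μ) : Integrable (fun ω => R ω * u ω) μ :=
    hu.bdd_mul hR' hR_bd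
  have hIcross : Integrable (fun ω => (R * (Z - g)) ω * (Y ω - Z ω)) μ := by
    convert weighted ((hZ.sub hg).integrable_mul (hY.sub hZ)) using 1
    ext ω; simp only [Pi.mul_apply, Pi.sub_apply, mul_assoc]
  have hcross : ∫ ω, (R * (Z - g)) ω * (Y ω - Z ω) ∂μ = 0 :=
    integral_mul_sub_condExp_eq_zero hm (hR.mul (stronglyMeasurable_condExp.sub hg_meas))
      (hY.integrable one_le_two) hIcross
  have hIA : Integrable (fun ω => R ω * (Y ω - Z ω) ^ 2) μ := weighted (hY.sub hZ).integrable_sq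
  have hIB : Integrable (fun ω => R ω * (Z ω - g ω) ^ 2) μ := weighted (hZ.sub hg).integrable_sq
  have hexpand : (fun ω => R ω * (Y ω - g ω) ^ 2) = fun ω =>
      (R ω * (Y ω - Z ω) ^ 2 + 2 * ((R * (Z - g)) ω * (Y ω - Z ω))) + R ω * (Z ω - g ω) ^ 2 := by
    ext ω; simp only [Pi.mul_apply, Pi.sub_apply]; ring
  rw [hexpand, integral_add ?_ hIB, integral_add hIA (hIcross.const_mul 2), integral_const_mul,
    hcross, mul_zero, add_zero]
  exact hIA.add (hIcross.const_mul 2)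

end MeasureTheory

open MeasureTheory

theorem statement_12_general {Ω : Type*} [ℱ : MeasurableSpace Ω] (P : Measure Ω)
    [IsProbabilityMeasure P] (𝔊 : MeasurableSpace Ω) (h𝔊 : 𝔊 ≤ ℱ)
    (Y : Ω → ℝ) (hY : MemLp Y 2 P)
    (R : Ω → ℝ) (C : ℝ) (hR_meas : Measurable[𝔊] R)
    (hR_bd : ∀ᵐ ω ∂P, 0 ≤ R ω ∧ R ω ≤ C)
    (g : Ω → ℝ) (hg_meas : Measurable[𝔊] g) (hg : MemLp g 2 P) :
    ((∫ ω, R ω * (Y ω - g ω) ^ 2 ∂P) =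
        (∫ ω, R ω * (Y ω - (P[Y|𝔊]) ω) ^ 2 ∂P) +
          ∫ ω, R ω * ((P[Y|𝔊]) ω - g ω) ^ 2 ∂P) ∧
      (∫ ω, R ω * (Y ω - (P[Y|𝔊]) ω) ^ 2 ∂P) ≤ ∫ ω, R ω * (Y ω - g ω) ^ 2 ∂P := by
  have hR_norm : ∀ᵐ ω ∂P, ‖R ω‖ ≤ C := hR_bd.mono fun ω hω => by
    rw [Real.norm_of_nonneg hω.1]; exact hω.2
  have hpyth := integral_mul_sq_sub_eq_add h𝔊 hY hR_meas.stronglyMeasurable hR_norm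
    hg_meas.stronglyMeasurable hg
  have hgap_nonneg : 0 ≤ ∫ ω, R ω * ((P[Y|𝔊]) ω - g ω) ^ 2 ∂P :=
    integral_nonneg_of_ae (hR_bd.mono fun ω hω => mul_nonneg hω.1 (sq_nonneg _))
  exact ⟨hpyth, hpyth ▸ le_add_of_nonneg_right hgap_nonneg⟩

/-- The conditional expectation minimizes the weighted squared-error risk over
`𝔊`-measurable candidates: the weighted Pythagorean identity and the resulting
risk inequality. -/
theorem statement_12 {Ω : Type*} [ℱ : MeasurableSpace Ω] (P : Measure Ω)
    [IsProbabilityMeasure P] (𝔊 : MeasurableSpace Ω) (h𝔊 : 𝔊 ≤ ℱ)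
    (Y : Ω → ℝ) (hY : MemLp Y 2 P)
    (R : Ω → ℝ) (C : ℝ) (hC : 0 ≤ C) (hR_meas : Measurable[𝔊] R)
    (hR_bd : ∀ᵐ ω ∂P, 0 ≤ R ω ∧ R ω ≤ C)
    (g : Ω → ℝ) (hg_meas : Measurable[𝔊] g) (hg : MemLp g 2 P) :
    ((∫ ω, R ω * (Y ω - g ω) ^ 2 ∂P) =
        (∫ ω, R ω * (Y ω - (P[Y|𝔊]) ω) ^ 2 ∂P) +
          ∫ ω, R ω * ((P[Y|𝔊]) ω - g ω) ^ 2 ∂P) ∧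
      (∫ ω, R ω * (Y ω - (P[Y|𝔊]) ω) ^ 2 ∂P) ≤ ∫ ω, R ω * (Y ω - g ω) ^ 2 ∂P :=
  statement_12_general (ℱ := ℱ) P 𝔊 h𝔊 Y hY R C hR_meas hR_bd g hg_meas hg
end
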